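/- arXiv:2110.07015 — 10 statements merged into one kernel-verified Lean document; each statement's English description precedes it below -/
import Mathlib

section
/- Let (t_k)_{k∈ℕ} and (α_k)_{k∈ℕ} be sequences of nonnegative real numbers, and let (β_k), (γ_k), (ω_k) be real sequences such that t_{k+1} ≤ α_k t_k + β_k ω_k + γ_k for every k ∈ ℕ. Suppose that for every k, α_k ∈ [0,1], α_k + β_k ≤ 1 and ω_k ≥ 0, that sup_{k∈ℕ} ω_k < ∞, and that either (∀ k ∈ ℕ, α_k + γ_k ≤ 1) or ∑_{k∈ℕ} |γ_k| < ∞. Then the sequence (t_k)_{k∈ℕ} is bounded. -/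
/-- Proposition 2.3(ii): boundedness of `(t k)` under the recursive inequality
`t (k+1) ≤ α k * t k + β k * ω k + γ k`. -/
theorem stmt1 (t α β γ ω : ℕ → ℝ)
    (ht : ∀ k, 0 ≤ t k) (hα0 : ∀ k, 0 ≤ α k)
    (hrec : ∀ k, t (k + 1) ≤ α k * t k + β k * ω k + γ k)
    (hα1 : ∀ k, α k ≤ 1) (hαβ : ∀ k, α k + β k ≤ 1)
    (hω0 : ∀ k, 0 ≤ ω k) (hωbdd : BddAbove (Set.range ω))
    (hγ : (∀ k, α k + γ k ≤ 1) ∨ Summable (fun k => |γ k|)) :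
    BddAbove (Set.range t) := by
  obtain ⟨M, hM⟩ := hωbdd
  have hMb : ∀ k, ω k ≤ M := fun k => hM ⟨k, rfl⟩
  have hM0 : 0 ≤ M := le_trans (hω0 0) (hMb 0)
  have key : ∀ k, β k * ω k ≤ (1 - α k) * M := by
    intro k
    calc β k * ω k ≤ (1 - α k) * ω k := by
          apply mul_le_mul_of_nonneg_right _ (hω0 k)
          linarith [hαβ k]
      _ ≤ (1 - α k) * M := mul_le_mul_of_nonneg_left (hMb k) (by linarith [hα1 k])
  rcases hγ with h1 | h2
  · set C := max (t 0) (M + 1) with hC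
    have hCM : M + 1 ≤ C := le_max_right _ _
    have hbd : ∀ k, t k ≤ C := by
      intro k
      induction k with
      | zero => exact le_max_left _ _
      | succ n ih =>
        have hr := hrec n
        have hk := key n
        have hg := h1 n
        nlinarith [hα0 n, hα1 n]
    exact ⟨C, by rintro x ⟨k, rfl⟩; exact hbd k⟩
  · set C := max (t 0) M with hC
    have hCM : M ≤ C := le_max_right _ _
    have hbd : ∀ k, t k ≤ C + ∑ j ∈ Finset.range k, |γ j| := by
      intro k
      induction k with
      | zero =>
        simp only [Finset.range_zero, Finset.sum_empty, add_zero]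
        exact le_max_left _ _
      | succ n ih =>
        have hr := hrec n
        have hk := key n
        have hg : γ n ≤ |γ n| := le_abs_self _
        have hP : 0 ≤ ∑ j ∈ Finset.range n, |γ j| :=
          Finset.sum_nonneg fun j _ => abs_nonneg _
        rw [Finset.sum_range_succ]
        nlinarith [hα0 n, hα1 n]
    have hS : ∀ k, ∑ j ∈ Finset.range k, |γ j| ≤ ∑' j, |γ j| :=
      fun k => Summable.sum_le_tsum _ (fun j _ => abs_nonneg _) h2
    exact ⟨C + ∑' j, |γ j|, by
      rintro x ⟨k, rfl⟩
      exact le_trans (hbd k) (by linarith [hS k])⟩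
end

section
/- Let (t_k)_{k∈ℕ} and (α_k)_{k∈ℕ} be sequences of nonnegative real numbers, and let (β_k), (γ_k), (ω_k) be real sequences such that t_{k+1} ≤ α_k t_k + β_k ω_k + γ_k for every k ∈ ℕ. Suppose that for every k, α_k ∈ [0,1] and β_k ∈ [0,1] with α_k + β_k ≤ 1, that ∑_{k∈ℕ} (1 − α_k) = ∞, that limsup_{k→∞} ω_k ≤ 0, and that ∑_{k∈ℕ} |γ_k| < ∞. Then lim_{k→∞} t_k = 0. -/
open Filter
set_option maxHeartbeats 1000000

/-- Proposition 2.3(iii): convergence of `(t k)` to `0` under the recursive inequality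
`t (k+1) ≤ α k * t k + β k * ω k + γ k`. -/
theorem stmt2 (t α β γ ω : ℕ → ℝ)
    (ht : ∀ k, 0 ≤ t k) (hα0 : ∀ k, 0 ≤ α k)
    (hrec : ∀ k, t (k + 1) ≤ α k * t k + β k * ω k + γ k)
    (hα1 : ∀ k, α k ≤ 1) (hβ0 : ∀ k, 0 ≤ β k) (hβ1 : ∀ k, β k ≤ 1)
    (hαβ : ∀ k, α k + β k ≤ 1)
    (hdiv : Tendsto (fun n => ∑ k ∈ Finset.range n, (1 - α k)) atTop atTop)
    (hω : ∀ ε > (0 : ℝ), ∀ᶠ k in atTop, ω k ≤ ε)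
    (hγ : Summable (fun k => |γ k|)) :
    Tendsto t atTop (nhds 0) := by
  rw [Metric.tendsto_atTop]
  intro ε hε
  set ε' := ε / 4 with hε'def
  have hε' : (0:ℝ) < ε' := by positivity
  -- choose N handling both ω and the γ-tail
  have htail : Tendsto (fun i => ∑' l, |γ (l + i)|) atTop (nhds 0) :=
    tendsto_sum_nat_add fun k => |γ k|
  obtain ⟨N1, hN1⟩ := eventually_atTop.1 (hω ε' hε')
  obtain ⟨N2, hN2⟩ := eventually_atTop.1 (htail.eventually_lt_const hε')
  set N := max N1 N2 with hNdef
  have htailN : (∑' l, |γ (l + N)|) < ε' := hN2 N (le_max_right _ _)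
  have hωN : ∀ k, N ≤ k → ω k ≤ ε' := fun k hk => hN1 k (le_trans (le_max_left _ _) hk)
  -- key inductive estimate
  have key : ∀ n, N ≤ n → t n ≤ (∏ k ∈ Finset.Ico N n, α k) * t N + ε'
      + ∑ k ∈ Finset.Ico N n, |γ k| := by
    intro n hn
    induction n, hn using Nat.le_induction with
    | base => simp; linarith [hε']
    | succ n hn ih =>
      have hprod : ∏ k ∈ Finset.Ico N (n+1), α k
          = (∏ k ∈ Finset.Ico N n, α k) * α n := Finset.prod_Ico_succ_top hn _
      have hsum : ∑ k ∈ Finset.Ico N (n+1), |γ k|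
          = (∑ k ∈ Finset.Ico N n, |γ k|) + |γ n| := Finset.sum_Ico_succ_top hn _
      have hP0 : 0 ≤ ∏ k ∈ Finset.Ico N n, α k :=
        Finset.prod_nonneg fun k _ => hα0 k
      have hS0 : 0 ≤ ∑ k ∈ Finset.Ico N n, |γ k| :=
        Finset.sum_nonneg fun k _ => abs_nonneg _
      have hωn : ω n ≤ ε' := hωN n hn
      have h1 := hrec n
      have h2 : β n * ω n ≤ β n * ε' := mul_le_mul_of_nonneg_left hωn (hβ0 n)
      have h3 : β n * ε' ≤ (1 - α n) * ε' :=
        mul_le_mul_of_nonneg_right (by linarith [hαβ n]) hε'.le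
      have h4 : γ n ≤ |γ n| := le_abs_self _
      have h5 : α n * t n ≤ α n * ((∏ k ∈ Finset.Ico N n, α k) * t N + ε'
          + ∑ k ∈ Finset.Ico N n, |γ k|) := mul_le_mul_of_nonneg_left ih (hα0 n)
      have h6 : (0:ℝ) ≤ (1 - α n) * ∑ k ∈ Finset.Ico N n, |γ k| :=
        mul_nonneg (by linarith [hα1 n]) hS0
      have h5' : α n * ((∏ k ∈ Finset.Ico N n, α k) * t N + ε'
          + ∑ k ∈ Finset.Ico N n, |γ k|)
          = (∏ k ∈ Finset.Ico N n, α k) * α n * t N + α n * ε'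
          + α n * ∑ k ∈ Finset.Ico N n, |γ k| := by ring
      rw [hprod, hsum]
      rw [h5'] at h5
      linarith [h2.trans h3]
  -- the product tends to 0
  have hPle : ∀ n, (∏ k ∈ Finset.Ico N n, α k)
      ≤ Real.exp (-(∑ k ∈ Finset.Ico N n, (1 - α k))) := by
    intro n
    have heq : ∑ k ∈ Finset.Ico N n, (α k - 1)
        = -(∑ k ∈ Finset.Ico N n, (1 - α k)) := by
      rw [← Finset.sum_neg_distrib]
      exact Finset.sum_congr rfl fun _ _ => by ring
    calc (∏ k ∈ Finset.Ico N n, α k)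
        ≤ ∏ k ∈ Finset.Ico N n, Real.exp (α k - 1) :=
          Finset.prod_le_prod (fun k _ => hα0 k)
            (fun k _ => by linarith [Real.add_one_le_exp (α k - 1)])
      _ = Real.exp (∑ k ∈ Finset.Ico N n, (α k - 1)) := (Real.exp_sum _ _).symm
      _ = Real.exp (-(∑ k ∈ Finset.Ico N n, (1 - α k))) := by rw [heq]
  have hsumIco : Tendsto (fun n => ∑ k ∈ Finset.Ico N n, (1 - α k)) atTop atTop := by
    apply Tendsto.congr'
      (f₁ := fun n => (∑ k ∈ Finset.range n, (1 - α k))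
        + (-(∑ k ∈ Finset.range N, (1 - α k))))
    · filter_upwards [eventually_ge_atTop N] with n hn
      rw [Finset.sum_Ico_eq_sub _ hn]; ring
    · exact tendsto_atTop_add_const_right atTop _ hdiv
  have hexp : Tendsto (fun n => Real.exp (-(∑ k ∈ Finset.Ico N n, (1 - α k))))
      atTop (nhds 0) := Real.tendsto_exp_neg_atTop_nhds_zero.comp hsumIco
  have hPtend : Tendsto (fun n => Real.exp (-(∑ k ∈ Finset.Ico N n, (1 - α k))) * t N)
      atTop (nhds 0) := by
    have := hexp.mul_const (t N)
    simpa using this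
  have hPev := eventually_atTop.1 (hPtend.eventually_lt_const hε')
  obtain ⟨M, hM⟩ := hPev
  -- bound on the γ-sums
  have hγ' : Summable (fun l => |γ (l + N)|) := (summable_nat_add_iff N).2 hγ
  have hSle : ∀ n, (∑ k ∈ Finset.Ico N n, |γ k|) < ε' := by
    intro n
    have h1 : ∑ k ∈ Finset.Ico N n, |γ k| = ∑ i ∈ Finset.range (n - N), |γ (N + i)| :=
      Finset.sum_Ico_eq_sum_range _ _ _
    have h2 : ∑ i ∈ Finset.range (n - N), |γ (N + i)|
        = ∑ i ∈ Finset.range (n - N), |γ (i + N)| := by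
      exact Finset.sum_congr rfl fun i _ => by rw [add_comm]
    have h3 : ∑ i ∈ Finset.range (n - N), |γ (i + N)| ≤ ∑' l, |γ (l + N)| :=
      Summable.sum_le_tsum _ (fun i _ => abs_nonneg _) hγ'
    rw [h1, h2]
    exact lt_of_le_of_lt h3 htailN
  refine ⟨max N M, fun n hn => ?_⟩
  have hnN : N ≤ n := le_trans (le_max_left _ _) hn
  have hnM : M ≤ n := le_trans (le_max_right _ _) hn
  have hb1 : (∏ k ∈ Finset.Ico N n, α k) * t N
      ≤ Real.exp (-(∑ k ∈ Finset.Ico N n, (1 - α k))) * t N :=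
    mul_le_mul_of_nonneg_right (hPle n) (ht N)
  have hb2 := hM n hnM
  have hb3 := hSle n
  have := key n hnN
  have htn : t n < ε := by
    have : t n < ε' + ε' + ε' := by linarith
    linarith [hε'def ▸ this]
  rw [Real.dist_eq, sub_zero, abs_of_nonneg (ht n)]
  exact htn
end

section
/- Let (t_k)_{k∈ℕ} and (α_k)_{k∈ℕ} be sequences of nonnegative real numbers, and let (β_k), (γ_k), (ω_k) be real sequences such that t_{k+1} ≤ α_k t_k + β_k ω_k + γ_k for every k ∈ ℕ. Suppose that for every k, α_k ∈ [0,1) and β_k ≥ 0, that sup_{k∈ℕ} β_k/(1 − α_k) < ∞ and ∑_{k∈ℕ} (1 − α_k) = ∞, that limsup_{k→∞} ω_k ≤ 0, and that ∑_{k∈ℕ} |γ_k| < ∞. Then lim_{k→∞} t_k = 0. -/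
open Filter

set_option maxHeartbeats 1000000 in
/-- Proposition 2.3(iv): convergence of `(t k)` to `0` under the recursive inequality
`t (k+1) ≤ α k * t k + β k * ω k + γ k`. -/
theorem stmt3 (t α β γ ω : ℕ → ℝ)
    (ht : ∀ k, 0 ≤ t k) (hα0 : ∀ k, 0 ≤ α k)
    (hrec : ∀ k, t (k + 1) ≤ α k * t k + β k * ω k + γ k)
    (hα1 : ∀ k, α k < 1) (hβ0 : ∀ k, 0 ≤ β k)
    (hfrac : BddAbove (Set.range fun k => β k / (1 - α k)))
    (hdiv : Tendsto (fun n => ∑ k ∈ Finset.range n, (1 - α k)) atTop atTop)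
    (hω : ∀ ε > (0 : ℝ), ∀ᶠ k in atTop, ω k ≤ ε)
    (hγ : Summable (fun k => |γ k|)) :
    Tendsto t atTop (nhds 0) := by
  obtain ⟨M, hM⟩ := hfrac
  have hM' : ∀ k, β k / (1 - α k) ≤ M := fun k => hM ⟨k, rfl⟩
  have hM0 : 0 ≤ M :=
    le_trans (div_nonneg (hβ0 0) (by linarith [hα1 0])) (hM' 0)
  rw [Metric.tendsto_atTop]
  intro ε hε
  set ε' := ε / (4 * (M + 1)) with hε'def
  have hε'pos : 0 < ε' := by positivity
  have hkey : ∀ k, ω k ≤ ε' → β k * ω k ≤ (1 - α k) * (ε / 4) := by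
    intro k hk
    have h1 : 0 < 1 - α k := by linarith [hα1 k]
    have hβM : β k ≤ (1 - α k) * (M + 1) := by
      have := hM' k
      rw [div_le_iff₀ h1] at this
      nlinarith
    calc β k * ω k ≤ β k * ε' := by nlinarith [hβ0 k]
      _ ≤ (1 - α k) * (M + 1) * ε' := by nlinarith
      _ = (1 - α k) * (ε / 4) := by
          rw [hε'def]; field_simp
  -- choose N with both properties
  obtain ⟨N₁, hN₁⟩ := eventually_atTop.mp (hω ε' hε'pos)
  have htail : Tendsto (fun i => ∑' k, |γ (k + i)|) atTop (nhds 0) :=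
    tendsto_sum_nat_add fun k => |γ k|
  have htail' : ∀ᶠ i in atTop, (∑' k, |γ (k + i)|) < ε / 4 :=
    htail.eventually_lt_const (by linarith)
  obtain ⟨N, hNge, hNtail⟩ := ((eventually_ge_atTop N₁).and htail').exists
  -- definitions
  set P : ℕ → ℝ := fun n => ∏ j ∈ Finset.range n, α (N + j) with hPdef
  set S : ℕ → ℝ := fun n => ∑ j ∈ Finset.range n, |γ (N + j)| with hSdef
  have hSnn : ∀ n, 0 ≤ S n := fun n => Finset.sum_nonneg fun _ _ => abs_nonneg _
  -- main inductive bound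
  have hbound : ∀ n, t (N + n) ≤ P n * t N + ε / 4 + S n := by
    intro n
    induction n with
    | zero => simp [hPdef, hSdef]; linarith
    | succ n ih =>
      have hω' : ω (N + n) ≤ ε' := hN₁ _ (by omega)
      have h2 := hkey (N + n) hω'
      have h3 : α (N + n) * t (N + n) ≤ α (N + n) * (P n * t N + ε / 4 + S n) :=
        mul_le_mul_of_nonneg_left ih (hα0 _)
      have h1 := hrec (N + n)
      have hγle : γ (N + n) ≤ |γ (N + n)| := le_abs_self _
      have hP1 : P (n + 1) = P n * α (N + n) := by
        simp [hPdef, Finset.prod_range_succ]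
      have hS1 : S (n + 1) = S n + |γ (N + n)| := by
        simp [hSdef, Finset.sum_range_succ]
      have hαS : α (N + n) * S n ≤ S n := by
        nlinarith [hSnn n, hα0 (N + n), hα1 (N + n)]
      have hrew : N + (n + 1) = (N + n) + 1 := by omega
      rw [hrew, hP1, hS1]
      nlinarith [hα0 (N + n), hα1 (N + n)]
  -- partial sums of |γ| bounded by tail tsum
  have hsum : Summable fun k => |γ (k + N)| := (summable_nat_add_iff N).2 hγ
  have hS : ∀ n, S n ≤ ∑' k, |γ (k + N)| := by
    intro n
    have h := Summable.sum_le_tsum (Finset.range n) (fun i _ => abs_nonneg _) hsum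
    have : S n = ∑ j ∈ Finset.range n, |γ (j + N)| := by
      simp [hSdef, Nat.add_comm]
    linarith [this ▸ h]
  -- P n → 0
  have hP0 : ∀ n, 0 ≤ P n := fun n => Finset.prod_nonneg fun _ _ => hα0 _
  have hPle : ∀ n, P n ≤ Real.exp (-(∑ j ∈ Finset.range n, (1 - α (N + j)))) := by
    intro n
    have : (-(∑ j ∈ Finset.range n, (1 - α (N + j)))) =
        ∑ j ∈ Finset.range n, (α (N + j) - 1) := by
      rw [← Finset.sum_neg_distrib]; apply Finset.sum_congr rfl; intros; ring
    rw [this, Real.exp_sum]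
    apply Finset.prod_le_prod (fun i _ => hα0 _) (fun i _ => ?_)
    have := Real.add_one_le_exp (α (N + i) - 1)
    linarith
  have hT : Tendsto (fun n => ∑ j ∈ Finset.range n, (1 - α (N + j))) atTop atTop := by
    have heq : ∀ n, ∑ j ∈ Finset.range n, (1 - α (N + j)) =
        (∑ k ∈ Finset.range (N + n), (1 - α k)) +
          (-(∑ k ∈ Finset.range N, (1 - α k))) := by
      intro n; rw [Finset.sum_range_add]; ring
    simp only [heq]
    apply tendsto_atTop_add_const_right
    exact hdiv.comp (by simpa [Nat.add_comm] using tendsto_add_atTop_nat N)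
  have hPtend : Tendsto P atTop (nhds 0) := by
    apply squeeze_zero hP0 hPle
    exact Real.tendsto_exp_atBot.comp (tendsto_neg_atTop_atBot.comp hT)
  have hPt : Tendsto (fun n => P n * t N) atTop (nhds 0) := by
    simpa using hPtend.mul_const (t N)
  have hPt' : ∀ᶠ n in atTop, P n * t N < ε / 4 :=
    hPt.eventually_lt_const (by linarith)
  obtain ⟨n₀, hn₀⟩ := eventually_atTop.mp hPt'
  refine ⟨N + n₀, fun k hk => ?_⟩
  obtain ⟨n, rfl⟩ : ∃ n, k = N + n := ⟨k - N, by omega⟩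
  have hn : n₀ ≤ n := by omega
  rw [Real.dist_eq, sub_zero, abs_of_nonneg (ht _)]
  have h1 := hbound n
  have h2 := hS n
  linarith [hn₀ n hn]
end

section
/- Let (y_k)_{k∈ℕ} be a sequence in H. Suppose that for every weak sequential cluster point z of (y_k), the limit lim_{k→∞} ‖y_k − z‖ exists (i.e., there is q ∈ ℝ with ‖y_k − z‖ → q). Then (y_k) has at most one weak sequential cluster point; that is, if z₁ and z₂ are both weak sequential cluster points of (y_k), then z₁ = z₂. -/
open Filter InnerProductSpace

/-- `z` is a weak sequential cluster point of the sequence `y`: some subsequence of `y`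
converges weakly to `z`. -/
def WSeqClusterPt {H : Type*} [NormedAddCommGroup H] [InnerProductSpace ℝ H]
    (y : ℕ → H) (z : H) : Prop :=
  ∃ φ : ℕ → ℕ, StrictMono φ ∧
    ∀ w : H, Tendsto (fun k => ⟪y (φ k), w⟫_ℝ) atTop (nhds ⟪z, w⟫_ℝ)

/-!
If `‖y k - z₁‖` and `‖y k - z₂‖` both converge, then so does
`‖y k - z₁‖² - ‖y k - z₂‖² = ‖z₁‖² - ‖z₂‖² - 2⟪y k, z₁ - z₂⟫`, hence `⟪y k, z₁ - z₂⟫` has a limit `L`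
along the whole sequence. Passing to the subsequences converging weakly to `z₁` and to `z₂` gives
`⟪z₁, z₁ - z₂⟫ = L = ⟪z₂, z₁ - z₂⟫`, i.e. `‖z₁ - z₂‖² = 0`.
-/

section

variable {H : Type*} [NormedAddCommGroup H] [InnerProductSpace ℝ H]

lemma norm_sub_sq_sub_norm_sub_sq_real (x a b : H) :
    ‖x - a‖ ^ 2 - ‖x - b‖ ^ 2 = ‖a‖ ^ 2 - ‖b‖ ^ 2 - 2 * ⟪x, a - b⟫_ℝ := by
  rw [norm_sub_sq_real, norm_sub_sq_real, inner_sub_right]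
  ring

lemma exists_tendsto_inner_sub_of_tendsto_norm_sub {y : ℕ → H} {a b : H} {p q : ℝ}
    (ha : Tendsto (fun k => ‖y k - a‖) atTop (nhds p))
    (hb : Tendsto (fun k => ‖y k - b‖) atTop (nhds q)) :
    ∃ L : ℝ, Tendsto (fun k => ⟪y k, a - b⟫_ℝ) atTop (nhds L) := by
  refine ⟨(‖a‖ ^ 2 - ‖b‖ ^ 2 - (p ^ 2 - q ^ 2)) / 2, ?_⟩
  have hdiff := (((ha.pow 2).sub (hb.pow 2)).const_sub (‖a‖ ^ 2 - ‖b‖ ^ 2)).div_const 2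
  refine hdiff.congr fun k => ?_
  rw [norm_sub_sq_sub_norm_sub_sq_real]
  ring

lemma WSeqClusterPt.inner_eq_of_tendsto {y : ℕ → H} {z w : H} {L : ℝ} (hz : WSeqClusterPt y z)
    (hL : Tendsto (fun k => ⟪y k, w⟫_ℝ) atTop (nhds L)) :
    ⟪z, w⟫_ℝ = L := by
  obtain ⟨φ, hφ, hweak⟩ := hz
  exact tendsto_nhds_unique (hweak w) (hL.comp hφ.tendsto_atTop)

lemma eq_of_inner_sub_eq_real {a b : H} (h : ⟪a, a - b⟫_ℝ = ⟪b, a - b⟫_ℝ) : a = b := by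
  rw [← sub_eq_zero, ← inner_self_eq_zero (𝕜 := ℝ), inner_sub_left, h, sub_self]

end

theorem stmt4_general {H : Type*} [NormedAddCommGroup H] [InnerProductSpace ℝ H]
    (y : ℕ → H)
    (hlim : ∀ z : H, WSeqClusterPt y z →
      ∃ q : ℝ, Tendsto (fun k => ‖y k - z‖) atTop (nhds q))
    (z₁ z₂ : H) (h₁ : WSeqClusterPt y z₁) (h₂ : WSeqClusterPt y z₂) :
    z₁ = z₂ := by
  obtain ⟨q₁, hq₁⟩ := hlim z₁ h₁
  obtain ⟨q₂, hq₂⟩ := hlim z₂ h₂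
  obtain ⟨L, hL⟩ := exists_tendsto_inner_sub_of_tendsto_norm_sub hq₁ hq₂
  exact eq_of_inner_sub_eq_real
    ((h₁.inner_eq_of_tendsto hL).trans (h₂.inner_eq_of_tendsto hL).symm)

/-- Proposition 2.7: if for every weak sequential cluster point `z` of `(y k)` the limit
`lim ‖y k - z‖` exists, then `(y k)` has at most one weak sequential cluster point. -/
theorem stmt4 {H : Type*} [NormedAddCommGroup H] [InnerProductSpace ℝ H] [CompleteSpace H]
    (y : ℕ → H)
    (hlim : ∀ z : H, WSeqClusterPt y z →
      ∃ q : ℝ, Tendsto (fun k => ‖y k - z‖) atTop (nhds q))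
    (z₁ z₂ : H) (h₁ : WSeqClusterPt y z₁) (h₂ : WSeqClusterPt y z₂) :
    z₁ = z₂ :=
  stmt4_general y hlim z₁ z₂ h₁ h₂
end

section
/- Let (y_k)_{k∈ℕ} be a sequence in H and let (c_k)_{k∈ℕ} be a sequence in (0,∞). Suppose that one of the following holds: (1) inf_{k∈ℕ} c_k > 0 and y_k − J_{c_k}(y_k) → 0 strongly; or (2) c_k → ∞, (y_k) is bounded, and there exists t ∈ ℕ such that y_{k+t} − J_{c_k}(y_k) → 0 strongly. Then every weak sequential cluster point of (y_k) belongs to zer A. -/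
/-!
The resolvent gives points `p_k := J_{c_k}(y_k)` on the graph of `A`, paired with
`q_k := (y_k - p_k) / c_k ∈ A p_k`. In case (1) `q_k → 0` because `1 / c_k` stays bounded
and `y_k - p_k → 0`; in case (2) because `y_k - p_k` stays bounded and `1 / c_k → 0`. In both
cases `p_k` is, up to a null sequence, the shifted sequence `y_{k+t}` (with `t = 0` in case (1)),
so along a subsequence `p_k ⇀ z`. The graph of a maximally monotone operator is closed in
weak × strong topology, hence `0 ∈ A z`.
-/

open Filter InnerProductSpace

open Topology

section WeakConvergence

variable {H : Type*} [NormedAddCommGroup H] [InnerProductSpace ℝ H]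

lemma exists_norm_le_of_tendsto_inner [CompleteSpace H] {p : ℕ → H} {z : H}
    (hp : ∀ w, Tendsto (fun k => ⟪p k, w⟫_ℝ) atTop (𝓝 ⟪z, w⟫_ℝ)) :
    ∃ C, ∀ k, ‖p k‖ ≤ C := by
  obtain ⟨C, hC⟩ := banach_steinhaus (g := fun k => innerSL ℝ (p k)) fun w => by
    obtain ⟨C, hC⟩ := (hp w).norm.bddAbove_range
    exact ⟨C, fun k => hC ⟨k, rfl⟩⟩
  exact ⟨C, fun k => by simpa [innerSL_apply_norm] using hC k⟩

lemma tendsto_inner_of_tendsto_sub {ι : Type*} {l : Filter ι} {a b : ι → H} {z : H}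
    (ha : ∀ w, Tendsto (fun k => ⟪a k, w⟫_ℝ) l (𝓝 ⟪z, w⟫_ℝ))
    (hab : Tendsto (fun k => a k - b k) l (𝓝 0)) :
    ∀ w, Tendsto (fun k => ⟪b k, w⟫_ℝ) l (𝓝 ⟪z, w⟫_ℝ) := fun w => by
  have hnull : Tendsto (fun k => ⟪a k - b k, w⟫_ℝ) l (𝓝 0) := by
    simpa using hab.inner (tendsto_const_nhds (x := w))
  simpa [inner_sub_left] using (ha w).sub hnull

lemma tendsto_inner_zero_of_norm_le {ι : Type*} {l : Filter ι} {a b : ι → H} {C : ℝ}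
    (ha : ∀ k, ‖a k‖ ≤ C) (hb : Tendsto b l (𝓝 0)) :
    Tendsto (fun k => ⟪a k, b k⟫_ℝ) l (𝓝 0) :=
  squeeze_zero_norm
    (fun k => (norm_inner_le_norm _ _).trans (mul_le_mul_of_nonneg_right (ha k) (norm_nonneg _)))
    (by simpa using hb.norm.const_mul C)

end WeakConvergence

lemma StrictMono.exists_tendsto_add_eq {φ : ℕ → ℕ} (hφ : StrictMono φ) (t : ℕ) :
    ∃ σ : ℕ → ℕ, Tendsto σ atTop atTop ∧ ∀ k, σ k + t = φ (k + t) :=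
  ⟨fun k => φ (k + t) - t,
    tendsto_atTop_mono (fun _ => Nat.le_sub_of_add_le hφ.le_apply) tendsto_id,
    fun _ => Nat.sub_add_cancel ((Nat.le_add_left _ _).trans hφ.le_apply)⟩

section Resolvent

variable {H : Type*} [NormedAddCommGroup H] [InnerProductSpace ℝ H] [CompleteSpace H]
  {A : H → Set H}

theorem mem_of_tendsto_inner_of_tendsto
    (hmono : ∀ x y xu yv : H, xu ∈ A x → yv ∈ A y → 0 ≤ ⟪x - y, xu - yv⟫_ℝ)
    (hmax : ∀ x xu : H, (∀ y yv : H, yv ∈ A y → 0 ≤ ⟪x - y, xu - yv⟫_ℝ) → xu ∈ A x)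
    {p q : ℕ → H} {z u : H} (hmem : ∀ k, q k ∈ A (p k))
    (hp : ∀ w, Tendsto (fun k => ⟪p k, w⟫_ℝ) atTop (𝓝 ⟪z, w⟫_ℝ))
    (hq : Tendsto q atTop (𝓝 u)) :
    u ∈ A z := by
  obtain ⟨C, hC⟩ := exists_norm_le_of_tendsto_inner hp
  refine hmax z u fun x v hv => ?_
  have hnull : Tendsto (fun k => ⟪p k - x, q k - u⟫_ℝ) atTop (𝓝 0) :=
    tendsto_inner_zero_of_norm_le (C := C + ‖x‖)
      (fun k => (norm_sub_le _ _).trans (by gcongr; exact hC k)) (tendsto_sub_nhds_zero_iff.2 hq)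
  have hweak : Tendsto (fun k => ⟪p k - x, u - v⟫_ℝ) atTop (𝓝 ⟪z - x, u - v⟫_ℝ) := by
    simpa only [inner_sub_left] using (hp (u - v)).sub_const ⟪x, u - v⟫_ℝ
  have hlim : Tendsto (fun k => ⟪p k - x, q k - v⟫_ℝ) atTop (𝓝 ⟪z - x, u - v⟫_ℝ) := by
    convert hnull.add hweak using 1
    · ext k
      rw [← inner_add_right, sub_add_sub_cancel]
    · rw [zero_add]
  exact ge_of_tendsto' hlim fun k => hmono _ _ _ _ (hmem k) hv

variable {J : ℝ → H → H}

theorem zero_mem_of_wSeqClusterPt_of_le_of_tendsto_sub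
    (hmono : ∀ x y xu yv : H, xu ∈ A x → yv ∈ A y → 0 ≤ ⟪x - y, xu - yv⟫_ℝ)
    (hmax : ∀ x xu : H, (∀ y yv : H, yv ∈ A y → 0 ≤ ⟪x - y, xu - yv⟫_ℝ) → xu ∈ A x)
    (hJ : ∀ c : ℝ, 0 < c → ∀ x : H, (1 / c) • (x - J c x) ∈ A (J c x))
    {y : ℕ → H} {c : ℕ → ℝ} {ε : ℝ} (hε : 0 < ε) (hεc : ∀ k, ε ≤ c k)
    (hres : Tendsto (fun k => y k - J (c k) (y k)) atTop (𝓝 0))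
    {z : H} (hz : WSeqClusterPt y z) :
    (0 : H) ∈ A z := by
  obtain ⟨φ, hφ, hweak⟩ := hz
  have hres' := hres.comp hφ.tendsto_atTop
  have hc : ∀ k, 0 < c k := fun k => hε.trans_le (hεc k)
  refine mem_of_tendsto_inner_of_tendsto hmono hmax (fun k => hJ _ (hc (φ k)) (y (φ k)))
    (tendsto_inner_of_tendsto_sub hweak hres') ?_
  refine IsBoundedUnder.smul_tendsto_zero ⟨1 / ε, eventually_map.2 (.of_forall fun k => ?_)⟩ hres'
  rw [Function.comp_apply, Real.norm_of_nonneg (one_div_pos.2 (hc _)).le]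
  exact one_div_le_one_div_of_le hε (hεc _)

theorem zero_mem_of_wSeqClusterPt_of_tendsto_atTop_of_tendsto_sub
    (hmono : ∀ x y xu yv : H, xu ∈ A x → yv ∈ A y → 0 ≤ ⟪x - y, xu - yv⟫_ℝ)
    (hmax : ∀ x xu : H, (∀ y yv : H, yv ∈ A y → 0 ≤ ⟪x - y, xu - yv⟫_ℝ) → xu ∈ A x)
    (hJ : ∀ c : ℝ, 0 < c → ∀ x : H, (1 / c) • (x - J c x) ∈ A (J c x))
    {y : ℕ → H} {c : ℕ → ℝ} (hc : ∀ k, 0 < c k) (hct : Tendsto c atTop atTop)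
    (hy : Bornology.IsBounded (Set.range y)) {t : ℕ}
    (hres : Tendsto (fun k => y (k + t) - J (c k) (y k)) atTop (𝓝 0))
    {z : H} (hz : WSeqClusterPt y z) :
    (0 : H) ∈ A z := by
  obtain ⟨φ, hφ, hweak⟩ := hz
  obtain ⟨σ, hσ, hσφ⟩ := hφ.exists_tendsto_add_eq t
  have hweak' : ∀ w, Tendsto (fun k => ⟪y (σ k + t), w⟫_ℝ) atTop (𝓝 ⟪z, w⟫_ℝ) := fun w => by
    simpa only [Function.comp_def, hσφ] using (hweak w).comp (tendsto_add_atTop_nat t)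
  have hres' := hres.comp hσ
  refine mem_of_tendsto_inner_of_tendsto hmono hmax (fun k => hJ _ (hc (σ k)) (y (σ k)))
    (tendsto_inner_of_tendsto_sub hweak' hres') (Tendsto.zero_smul_isBoundedUnder_le ?_ ?_)
  · simpa only [one_div, Function.comp_def, Pi.inv_def] using (hct.comp hσ).inv_tendsto_atTop
  · obtain ⟨M, hM⟩ := isBounded_iff_forall_norm_le.1 hy
    obtain ⟨D, hD⟩ := hres'.norm.isBoundedUnder_le
    refine ⟨M + M + D, eventually_map.2 ((eventually_map.1 hD).mono fun k hk => ?_)⟩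
    set x := y (σ k + t)
    calc ‖y (σ k) - J (c (σ k)) (y (σ k))‖
        = ‖(y (σ k) - x) + (x - J (c (σ k)) (y (σ k)))‖ := by rw [sub_add_sub_cancel]
      _ ≤ ‖y (σ k)‖ + ‖x‖ + ‖x - J (c (σ k)) (y (σ k))‖ :=
          (norm_add_le _ _).trans (add_le_add_left (norm_sub_le _ _) _)
      _ ≤ M + M + D := add_le_add (add_le_add (hM _ ⟨_, rfl⟩) (hM _ ⟨_, rfl⟩)) hk

end Resolvent

/-- Proposition 2.10: under either (1) `inf c_k > 0` and `y_k - J_{c_k}(y_k) → 0`, or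
(2) `c_k → ∞`, `(y_k)` bounded, and `y_{k+t} - J_{c_k}(y_k) → 0` for some `t`,
every weak sequential cluster point of `(y_k)` is a zero of the maximally monotone
operator `A`. -/
theorem stmt5 {H : Type*} [NormedAddCommGroup H] [InnerProductSpace ℝ H] [CompleteSpace H]
    (A : H → Set H)
    (hmono : ∀ x y xu yv : H, xu ∈ A x → yv ∈ A y → 0 ≤ ⟪x - y, xu - yv⟫_ℝ)
    (hmax : ∀ x xu : H, (∀ y yv : H, yv ∈ A y → 0 ≤ ⟪x - y, xu - yv⟫_ℝ) → xu ∈ A x)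
    (J : ℝ → H → H)
    (hJ : ∀ c : ℝ, 0 < c → ∀ x : H, (1 / c) • (x - J c x) ∈ A (J c x))
    (y : ℕ → H) (c : ℕ → ℝ) (hc : ∀ k, 0 < c k)
    (hcase :
      ((∃ ε > (0 : ℝ), ∀ k, ε ≤ c k) ∧
        Tendsto (fun k => y k - J (c k) (y k)) atTop (nhds 0)) ∨
      (Tendsto c atTop atTop ∧ Bornology.IsBounded (Set.range y) ∧
        ∃ t : ℕ, Tendsto (fun k => y (k + t) - J (c k) (y k)) atTop (nhds 0))) :
    ∀ z : H, WSeqClusterPt y z → (0 : H) ∈ A z := by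
  intro z hz
  rcases hcase with ⟨⟨ε, hε, hεc⟩, hres⟩ | ⟨hct, hy, t, hres⟩
  · exact zero_mem_of_wSeqClusterPt_of_le_of_tendsto_sub hmono hmax hJ hε hεc hres hz
  · exact zero_mem_of_wSeqClusterPt_of_tendsto_atTop_of_tendsto_sub hmono hmax hJ hc hct hy
      hres hz
end

section
/- Suppose zer A ≠ ∅ and let p ∈ zer A. Let (y_k)_{k∈ℕ} be a sequence in H and (c_k)_{k∈ℕ} a sequence in (0,∞). Suppose that the limit lim_{k→∞} ‖y_k − p‖ exists (in ℝ₊) and that there is t ∈ ℕ such that y_{k+t} − J_{c_k}(y_k) → 0 strongly. Then y_k − J_{c_k}(y_k) → 0 strongly and y_k − y_{k+t} → 0 strongly. -/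
open Filter InnerProductSpace

/-- Proposition 2.11: if `p ∈ zer A`, `lim ‖y_k - p‖` exists in `ℝ₊`, and
`y_{k+t} - J_{c_k}(y_k) → 0` for some `t ∈ ℕ`, then `y_k - J_{c_k}(y_k) → 0` and
`y_k - y_{k+t} → 0`. -/
theorem stmt6 {H : Type*} [NormedAddCommGroup H] [InnerProductSpace ℝ H] [CompleteSpace H]
    (A : H → Set H)
    (hmono : ∀ x y xu yv : H, xu ∈ A x → yv ∈ A y → 0 ≤ ⟪x - y, xu - yv⟫_ℝ)
    (hmax : ∀ x xu : H, (∀ y yv : H, yv ∈ A y → 0 ≤ ⟪x - y, xu - yv⟫_ℝ) → xu ∈ A x)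
    (J : ℝ → H → H)
    (hJ : ∀ c : ℝ, 0 < c → ∀ x : H, (1 / c) • (x - J c x) ∈ A (J c x))
    (p : H) (hp : (0 : H) ∈ A p)
    (y : ℕ → H) (c : ℕ → ℝ) (hc : ∀ k, 0 < c k)
    (hlim : ∃ q : ℝ, 0 ≤ q ∧ Tendsto (fun k => ‖y k - p‖) atTop (nhds q))
    (t : ℕ)
    (hconv : Tendsto (fun k => y (k + t) - J (c k) (y k)) atTop (nhds 0)) :
    Tendsto (fun k => y k - J (c k) (y k)) atTop (nhds 0) ∧
      Tendsto (fun k => y k - y (k + t)) atTop (nhds 0) := by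
  obtain ⟨q, hq0, hq⟩ := hlim
  -- key inequality : firm nonexpansiveness at p
  have key : ∀ k, ‖y k - J (c k) (y k)‖ ^ 2 + ‖J (c k) (y k) - p‖ ^ 2 ≤ ‖y k - p‖ ^ 2 := by
    intro k
    set x := y k
    set j := J (c k) x with hj
    have hmem := hJ (c k) (hc k) x
    have h0 : 0 ≤ ⟪j - p, (1 / c k) • (x - j) - 0⟫_ℝ := hmono j p _ 0 hmem hp
    rw [sub_zero, real_inner_smul_right] at h0
    have hinv : 0 < 1 / c k := one_div_pos.mpr (hc k)
    have hip : 0 ≤ ⟪j - p, x - j⟫_ℝ := by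
      by_contra h
      push_neg at h
      nlinarith [mul_pos hinv (neg_pos.mpr h)]
    have hxp : x - p = (x - j) + (j - p) := by abel
    have := norm_add_sq_real (x - j) (j - p)
    rw [← hxp] at this
    have hip' : 0 ≤ ⟪x - j, j - p⟫_ℝ := by rwa [real_inner_comm] at hip
    nlinarith
  set e : ℕ → ℝ := fun k => ‖y (k + t) - J (c k) (y k)‖ with he
  have he0 : Tendsto e atTop (nhds 0) := by
    simpa using hconv.norm
  have hat : Tendsto (fun k => ‖y (k + t) - p‖) atTop (nhds q) :=
    hq.comp (tendsto_add_atTop_nat t)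
  -- lower bound on ‖J y_k − p‖
  have hlow : ∀ k, max (‖y (k + t) - p‖ - e k) 0 ≤ ‖J (c k) (y k) - p‖ := by
    intro k
    refine max_le ?_ (norm_nonneg _)
    have : ‖y (k + t) - p‖ ≤ e k + ‖J (c k) (y k) - p‖ := by
      have : y (k + t) - p = (y (k + t) - J (c k) (y k)) + (J (c k) (y k) - p) := by abel
      calc ‖y (k + t) - p‖ = ‖(y (k + t) - J (c k) (y k)) + (J (c k) (y k) - p)‖ := by rw [← this]
        _ ≤ _ := norm_add_le _ _
    linarith
  -- squeeze for squared norms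
  have hub : ∀ k, ‖y k - J (c k) (y k)‖ ^ 2 ≤
      ‖y k - p‖ ^ 2 - (max (‖y (k + t) - p‖ - e k) 0) ^ 2 := by
    intro k
    have h1 := key k
    have h2 : (max (‖y (k + t) - p‖ - e k) 0) ^ 2 ≤ ‖J (c k) (y k) - p‖ ^ 2 :=
      pow_le_pow_left₀ (le_max_right _ _) (hlow k) 2
    linarith
  have hubt : Tendsto (fun k => ‖y k - p‖ ^ 2 - (max (‖y (k + t) - p‖ - e k) 0) ^ 2)
      atTop (nhds 0) := by
    have h1 : Tendsto (fun k => max (‖y (k + t) - p‖ - e k) 0) atTop (nhds (max q 0)) :=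
      by simpa using (hat.sub he0).max tendsto_const_nhds
    rw [max_eq_left hq0] at h1
    have := (hq.pow 2).sub (h1.pow 2)
    simpa using this
  have hsq : Tendsto (fun k => ‖y k - J (c k) (y k)‖ ^ 2) atTop (nhds 0) := by
    refine tendsto_of_tendsto_of_tendsto_of_le_of_le tendsto_const_nhds hubt
      (fun k => sq_nonneg _) hub
  have hn : Tendsto (fun k => ‖y k - J (c k) (y k)‖) atTop (nhds 0) := by
    have := (hsq.sqrt)
    simp only [Real.sqrt_sq (norm_nonneg _), Real.sqrt_zero] at this
    exact this
  have h1 : Tendsto (fun k => y k - J (c k) (y k)) atTop (nhds 0) :=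
    tendsto_zero_iff_norm_tendsto_zero.mpr hn
  refine ⟨h1, ?_⟩
  have := h1.sub hconv
  simpa using this.congr (fun k => by abel)
end

section
/- Suppose that zer A ≠ ∅ and that one of the following holds: (1) limsup_{k→∞} ξ_k < 1, sup_{k∈ℕ} |α_k| < ∞, and sup_{k∈ℕ} ‖δ_k e_k‖ < ∞; (2) for every k, ξ_k ≤ 1, and in addition (a) [for every k, |α_k| + ξ_k ≤ 1] or ∑_k |α_k| < ∞; (b) [for every k, ξ_k + |δ_k| ≤ 1 and sup_k ‖e_k‖ < ∞] or ∑_k ‖δ_k e_k‖ < ∞; and (c) [for every k, ξ_k + |1 − β_k − γ_k| ≤ 1] or ∑_k |1 − β_k − γ_k| < ∞; (3) for every k, |α_k| + ξ_k ≤ 1, ∑_k |1 − α_k − β_k − γ_k| < ∞, and ∑_k ‖δ_k e_k‖ < ∞; (4) for every k, ξ_k + |δ_k| ≤ 1, sup_k ‖e_k‖ < ∞, ∑_k |1 − β_k − γ_k − δ_k| < ∞, and ∑_k |α_k| < ∞. Then the sequence (x_k)_{k∈ℕ} is bounded. -/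
open Filter InnerProductSpace

private lemma ppa_aux_bdd (a ξ s : ℕ → ℝ) (C : ℝ) (hξ0 : ∀ k, 0 ≤ ξ k) (hξ1 : ∀ k, ξ k ≤ 1)
    (hs : ∀ k, 0 ≤ s k)
    (hrec : ∀ k, a (k + 1) ≤ ξ k * a k + (1 - ξ k) * C + s k) :
    ∀ k, a k ≤ max (a 0) C + ∑ j ∈ Finset.range k, s j := by
  intro k
  induction k with
  | zero => simpa using le_max_left (a 0) C
  | succ n ih =>
    have h1 := hrec n
    have h2 : 0 ≤ ∑ j ∈ Finset.range n, s j := Finset.sum_nonneg fun j _ => hs j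
    have h3 : C ≤ max (a 0) C := le_max_right _ _
    have h4 : ξ n * a n ≤ ξ n * (max (a 0) C + ∑ j ∈ Finset.range n, s j) :=
      mul_le_mul_of_nonneg_left ih (hξ0 n)
    have h5 : (1 - ξ n) * C ≤ (1 - ξ n) * (max (a 0) C + ∑ j ∈ Finset.range n, s j) :=
      mul_le_mul_of_nonneg_left (by linarith) (by linarith [hξ1 n])
    rw [Finset.sum_range_succ]
    nlinarith [h1, h4, h5]

private lemma ppa_aux_main (a ξ t1 t2 t3 : ℕ → ℝ) (hξ0 : ∀ k, 0 ≤ ξ k) (hξ1 : ∀ k, ξ k ≤ 1)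
    (h1 : ∃ (C S : ℝ) (s : ℕ → ℝ), (∀ k, 0 ≤ s k) ∧ (∀ k, t1 k ≤ (1 - ξ k) * C + s k) ∧
      ∀ n, ∑ j ∈ Finset.range n, s j ≤ S)
    (h2 : ∃ (C S : ℝ) (s : ℕ → ℝ), (∀ k, 0 ≤ s k) ∧ (∀ k, t2 k ≤ (1 - ξ k) * C + s k) ∧
      ∀ n, ∑ j ∈ Finset.range n, s j ≤ S)
    (h3 : ∃ (C S : ℝ) (s : ℕ → ℝ), (∀ k, 0 ≤ s k) ∧ (∀ k, t3 k ≤ (1 - ξ k) * C + s k) ∧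
      ∀ n, ∑ j ∈ Finset.range n, s j ≤ S)
    (hrec : ∀ k, a (k + 1) ≤ ξ k * a k + t1 k + t2 k + t3 k) :
    ∃ B, ∀ k, a k ≤ B := by
  obtain ⟨C1, S1, s1, hs1, hb1, hS1⟩ := h1
  obtain ⟨C2, S2, s2, hs2, hb2, hS2⟩ := h2
  obtain ⟨C3, S3, s3, hs3, hb3, hS3⟩ := h3
  have key := ppa_aux_bdd a ξ (fun k => s1 k + s2 k + s3 k) (C1 + C2 + C3) hξ0 hξ1
    (fun k => by
      show (0:ℝ) ≤ s1 k + s2 k + s3 k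
      have := hs1 k; have := hs2 k; have := hs3 k; linarith)
    (fun k => by
      show a (k + 1) ≤ ξ k * a k + (1 - ξ k) * (C1 + C2 + C3) + (s1 k + s2 k + s3 k)
      have := hrec k; have := hb1 k; have := hb2 k; have := hb3 k; nlinarith)
  refine ⟨max (a 0) (C1 + C2 + C3) + (S1 + S2 + S3), fun k => ?_⟩
  have hsum : ∑ j ∈ Finset.range k, (s1 j + s2 j + s3 j)
      = (∑ j ∈ Finset.range k, s1 j) + (∑ j ∈ Finset.range k, s2 j)
        + ∑ j ∈ Finset.range k, s3 j := by
    rw [Finset.sum_add_distrib, Finset.sum_add_distrib]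
  have := key k
  rw [hsum] at this
  linarith [hS1 k, hS2 k, hS3 k]

private lemma ppa_pack_sup (ξ t : ℕ → ℝ) (C : ℝ) (hb : ∀ k, t k ≤ (1 - ξ k) * C) :
    ∃ (C' S : ℝ) (s : ℕ → ℝ), (∀ k, 0 ≤ s k) ∧ (∀ k, t k ≤ (1 - ξ k) * C' + s k) ∧
      ∀ n, ∑ j ∈ Finset.range n, s j ≤ S :=
  ⟨C, 0, fun _ => 0, fun _ => le_rfl, fun k => by simpa using hb k, fun n => by simp⟩

private lemma ppa_pack_sum (ξ t : ℕ → ℝ) (ht : ∀ k, 0 ≤ t k) (hsum : Summable t) :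
    ∃ (C' S : ℝ) (s : ℕ → ℝ), (∀ k, 0 ≤ s k) ∧ (∀ k, t k ≤ (1 - ξ k) * C' + s k) ∧
      ∀ n, ∑ j ∈ Finset.range n, s j ≤ S :=
  ⟨0, ∑' k, t k, t, ht, fun k => by simp, fun n => Summable.sum_le_tsum _ (fun i _ => ht i) hsum⟩

/-- Proposition 3.3: boundedness of the generalized proximal point algorithm iterates
`x_{k+1} = α_k u + β_k x_k + γ_k J_{c_k}(x_k) + δ_k e_k` when `zer A ≠ ∅` and one of
four parameter conditions holds (with `ξ_k := |β_k + γ_k/2| + |γ_k/2|`). -/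
theorem stmt8 {H : Type*} [NormedAddCommGroup H] [InnerProductSpace ℝ H] [CompleteSpace H]
    (A : H → Set H)
    (hmono : ∀ x y xu yv : H, xu ∈ A x → yv ∈ A y → 0 ≤ ⟪x - y, xu - yv⟫_ℝ)
    (hmax : ∀ x xu : H, (∀ y yv : H, yv ∈ A y → 0 ≤ ⟪x - y, xu - yv⟫_ℝ) → xu ∈ A x)
    (J : ℝ → H → H)
    (hJ : ∀ c : ℝ, 0 < c → ∀ x : H, (1 / c) • (x - J c x) ∈ A (J c x))
    (u : H) (e : ℕ → H) (c α β γ δ : ℕ → ℝ) (hc : ∀ k, 0 < c k)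
    (x : ℕ → H)
    (hrec : ∀ k, x (k + 1) = α k • u + β k • x k + γ k • J (c k) (x k) + δ k • e k)
    (ξ : ℕ → ℝ) (hξ : ∀ k, ξ k = |β k + γ k / 2| + |γ k / 2|)
    (hzer : ∃ p : H, (0 : H) ∈ A p)
    (hcase :
      -- (1)
      ((∃ r < (1 : ℝ), ∀ᶠ k in atTop, ξ k ≤ r) ∧
        BddAbove (Set.range fun k => |α k|) ∧
        BddAbove (Set.range fun k => ‖δ k • e k‖)) ∨
      -- (2)
      ((∀ k, ξ k ≤ 1) ∧
        ((∀ k, |α k| + ξ k ≤ 1) ∨ Summable (fun k => |α k|)) ∧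
        (((∀ k, ξ k + |δ k| ≤ 1) ∧ BddAbove (Set.range fun k => ‖e k‖)) ∨
          Summable (fun k => ‖δ k • e k‖)) ∧
        ((∀ k, ξ k + |1 - β k - γ k| ≤ 1) ∨ Summable (fun k => |1 - β k - γ k|))) ∨
      -- (3)
      ((∀ k, |α k| + ξ k ≤ 1) ∧
        Summable (fun k => |1 - α k - β k - γ k|) ∧
        Summable (fun k => ‖δ k • e k‖)) ∨
      -- (4)
      ((∀ k, ξ k + |δ k| ≤ 1) ∧
        BddAbove (Set.range fun k => ‖e k‖) ∧
        Summable (fun k => |1 - β k - γ k - δ k|) ∧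
        Summable (fun k => |α k|))) :
    Bornology.IsBounded (Set.range x) := by
  obtain ⟨p, hp⟩ := hzer
  -- firm nonexpansiveness at p
  have hfirm : ∀ k, 0 ≤ ⟪J (c k) (x k) - p, x k - J (c k) (x k)⟫_ℝ := by
    intro k
    have h := hmono (J (c k) (x k)) p ((1 / c k) • (x k - J (c k) (x k))) 0
      (hJ _ (hc k) _) hp
    rw [sub_zero, real_inner_smul_right] at h
    have h2 := mul_nonneg (hc k).le h
    rwa [← mul_assoc, mul_one_div_cancel (hc k).ne', one_mul] at h2
  -- the reflection is in the ball
  have hRball : ∀ k, ‖(2:ℝ) • J (c k) (x k) - x k - p‖ ≤ ‖x k - p‖ := by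
    intro k
    have hsq : ‖(2:ℝ) • J (c k) (x k) - x k - p‖ ^ 2 ≤ ‖x k - p‖ ^ 2 := by
      have hid : (2:ℝ) • J (c k) (x k) - x k - p
          = (2:ℝ) • (J (c k) (x k) - p) - (x k - p) := by module
      rw [hid, norm_sub_sq_real, norm_smul, real_inner_smul_left]
      have hdec : x k - p = (x k - J (c k) (x k)) + (J (c k) (x k) - p) := by abel
      have h2 : ⟪J (c k) (x k) - p, x k - p⟫_ℝ
          = ⟪J (c k) (x k) - p, x k - J (c k) (x k)⟫_ℝ + ‖J (c k) (x k) - p‖ ^ 2 := by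
        rw [hdec, inner_add_right, real_inner_self_eq_norm_sq]
      rw [h2]
      have := hfirm k
      simp only [Real.norm_ofNat]
      nlinarith [this]
    nlinarith [norm_nonneg ((2:ℝ) • J (c k) (x k) - x k - p), norm_nonneg (x k - p), hsq]
  -- contraction property of the relaxed resolvent step
  have hT : ∀ k, ‖β k • x k + γ k • J (c k) (x k) - (β k + γ k) • p‖ ≤ ξ k * ‖x k - p‖ := by
    intro k
    have hid : β k • x k + γ k • J (c k) (x k) - (β k + γ k) • p
        = (β k + γ k / 2) • (x k - p) + (γ k / 2) • ((2:ℝ) • J (c k) (x k) - x k - p) := by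
      module
    rw [hid, hξ k]
    refine le_trans (norm_add_le _ _) ?_
    rw [norm_smul, norm_smul, Real.norm_eq_abs, Real.norm_eq_abs]
    have h := hRball k
    nlinarith [abs_nonneg (γ k / 2), abs_nonneg (β k + γ k / 2), norm_nonneg (x k - p)]
  have hξ0 : ∀ k, 0 ≤ ξ k := fun k => by rw [hξ k]; positivity
  have hβγ : ∀ k, |β k + γ k| ≤ ξ k := by
    intro k
    rw [hξ k, show β k + γ k = β k + γ k / 2 + γ k / 2 by ring]
    exact abs_add_le _ _
  -- norm of a 4-fold sum
  have norm4 : ∀ a b v w : H, ‖a + b + v + w‖ ≤ ‖a‖ + ‖b‖ + ‖v‖ + ‖w‖ := by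
    intro a b v w
    have h1 := norm_add_le (a + b + v) w
    have h2 := norm_add_le (a + b) v
    have h3 := norm_add_le a b
    linarith
  -- the three recursive inequalities
  have hrecA : ∀ k, ‖x (k + 1) - p‖ ≤ ξ k * ‖x k - p‖ + |α k| * ‖u‖ + ‖δ k • e k‖
      + |1 - β k - γ k| * ‖p‖ := by
    intro k
    have hid : x (k + 1) - p = (β k • x k + γ k • J (c k) (x k) - (β k + γ k) • p)
        + α k • u + δ k • e k + (-(1 - β k - γ k)) • p := by
      rw [hrec k]; module
    rw [hid]
    refine le_trans (norm4 _ _ _ _) ?_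
    rw [norm_smul (α k) u, norm_smul (-(1 - β k - γ k)) p, Real.norm_eq_abs,
      Real.norm_eq_abs, abs_neg]
    linarith [hT k]
  have hrecB : ∀ k, ‖x (k + 1) - p‖ ≤ ξ k * ‖x k - p‖ + |α k| * ‖u - p‖ + ‖δ k • e k‖
      + |1 - α k - β k - γ k| * ‖p‖ := by
    intro k
    have hid : x (k + 1) - p = (β k • x k + γ k • J (c k) (x k) - (β k + γ k) • p)
        + α k • (u - p) + δ k • e k + (-(1 - α k - β k - γ k)) • p := by
      rw [hrec k]; module
    rw [hid]
    refine le_trans (norm4 _ _ _ _) ?_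
    rw [norm_smul (α k) (u - p), norm_smul (-(1 - α k - β k - γ k)) p, Real.norm_eq_abs,
      Real.norm_eq_abs, abs_neg]
    linarith [hT k]
  have hrecC : ∀ k, ‖x (k + 1) - p‖ ≤ ξ k * ‖x k - p‖ + |α k| * ‖u‖ + |δ k| * ‖e k - p‖
      + |1 - β k - γ k - δ k| * ‖p‖ := by
    intro k
    have hid : x (k + 1) - p = (β k • x k + γ k • J (c k) (x k) - (β k + γ k) • p)
        + α k • u + δ k • (e k - p) + (-(1 - β k - γ k - δ k)) • p := by
      rw [hrec k]; module
    rw [hid]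
    refine le_trans (norm4 _ _ _ _) ?_
    rw [norm_smul (α k) u, norm_smul (δ k) (e k - p), norm_smul (-(1 - β k - γ k - δ k)) p,
      Real.norm_eq_abs, Real.norm_eq_abs, Real.norm_eq_abs, abs_neg]
    linarith [hT k]
  -- it suffices to bound ‖x k - p‖
  suffices hB : ∃ B, ∀ k, ‖x k - p‖ ≤ B by
    obtain ⟨B, hB⟩ := hB
    rw [isBounded_iff_forall_norm_le]
    refine ⟨B + ‖p‖, ?_⟩
    rintro y ⟨k, rfl⟩
    calc ‖x k‖ = ‖(x k - p) + p‖ := by rw [sub_add_cancel]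
      _ ≤ ‖x k - p‖ + ‖p‖ := norm_add_le _ _
      _ ≤ B + ‖p‖ := by linarith [hB k]
  rcases hcase with ⟨⟨r, hr1, hr2⟩, ⟨Aα, hAα⟩, ⟨Eδ, hEδ⟩⟩ | ⟨hξ1, h2a, h2b, h2c⟩ |
    ⟨h3a, h3b, h3c⟩ | ⟨h4a, ⟨E, hE⟩, h4c, h4d⟩
  · -- case (1)
    obtain ⟨N, hN⟩ := eventually_atTop.mp hr2
    have hAα' : ∀ k, |α k| ≤ Aα := fun k => hAα (Set.mem_range_self k)
    have hEδ' : ∀ k, ‖δ k • e k‖ ≤ Eδ := fun k => hEδ (Set.mem_range_self k)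
    set r' := max r 0 with hr'def
    have hr'0 : 0 ≤ r' := le_max_right _ _
    have hr'1 : r' < 1 := max_lt hr1 zero_lt_one
    set M := Aα * ‖u‖ + Eδ + 2 * ‖p‖ with hMdef
    have hstep : ∀ k, N ≤ k →
        ‖x (k + 1) - p‖ ≤ r' * ‖x k - p‖ + (1 - r') * (M / (1 - r')) := by
      intro k hk
      have h1 := hrecA k
      have h2 : ξ k ≤ r' := le_trans (hN k hk) (le_max_left _ _)
      have hb := abs_le.mp ((hβγ k).trans (h2.trans hr'1.le))
      have h3 : |1 - β k - γ k| ≤ 2 := by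
        rw [abs_le]; constructor <;> [linarith [hb.2]; linarith [hb.1]]
      have hne : (1:ℝ) - r' ≠ 0 := by intro hh; rw [sub_eq_zero] at hh; linarith
      have h4 : (1 - r') * (M / (1 - r')) = M := by
        rw [mul_comm, div_mul_cancel₀ _ hne]
      have h5 : ξ k * ‖x k - p‖ ≤ r' * ‖x k - p‖ :=
        mul_le_mul_of_nonneg_right h2 (norm_nonneg _)
      have h8 : |1 - β k - γ k| * ‖p‖ ≤ 2 * ‖p‖ :=
        mul_le_mul_of_nonneg_right h3 (norm_nonneg _)
      have h9 : |α k| * ‖u‖ ≤ Aα * ‖u‖ :=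
        mul_le_mul_of_nonneg_right (hAα' k) (norm_nonneg _)
      rw [h4, hMdef]
      linarith [hEδ' k]
    have hsh := ppa_aux_bdd (fun j => ‖x (N + j) - p‖) (fun _ => r') (fun _ => 0)
      (M / (1 - r')) (fun _ => hr'0) (fun _ => hr'1.le) (fun _ => le_rfl)
      (fun j => by
        have h := hstep (N + j) (Nat.le_add_right _ _)
        show ‖x (N + j + 1) - p‖ ≤ r' * ‖x (N + j) - p‖ + (1 - r') * (M / (1 - r')) + 0
        simpa using h)
    refine ⟨max ‖x N - p‖ (M / (1 - r')) + ∑ i ∈ Finset.range N, ‖x i - p‖,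
      fun k => ?_⟩
    rcases le_or_gt N k with h | h
    · have hk := hsh (k - N)
      simp only [Finset.sum_const_zero, add_zero, Nat.add_zero] at hk
      rw [Nat.add_sub_cancel' h] at hk
      have hnn : 0 ≤ ∑ i ∈ Finset.range N, ‖x i - p‖ :=
        Finset.sum_nonneg fun i _ => norm_nonneg _
      linarith
    · have hmem : k ∈ Finset.range N := Finset.mem_range.mpr h
      have h1 : ‖x k - p‖ ≤ ∑ i ∈ Finset.range N, ‖x i - p‖ :=
        Finset.single_le_sum (f := fun i => ‖x i - p‖) (fun i _ => norm_nonneg _) hmem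
      have h2 : (0:ℝ) ≤ max ‖x N - p‖ (M / (1 - r')) :=
        le_trans (norm_nonneg _) (le_max_left _ _)
      linarith
  · -- case (2)
    refine ppa_aux_main (fun k => ‖x k - p‖) ξ (fun k => |α k| * ‖u‖)
      (fun k => ‖δ k • e k‖) (fun k => |1 - β k - γ k| * ‖p‖) hξ0 hξ1 ?_ ?_ ?_ hrecA
    · rcases h2a with h | h
      · exact ppa_pack_sup ξ _ ‖u‖ fun k =>
          mul_le_mul_of_nonneg_right (by linarith [h k]) (norm_nonneg u)
      · exact ppa_pack_sum ξ _ (fun k => mul_nonneg (abs_nonneg _) (norm_nonneg _))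
          (h.mul_right ‖u‖)
    · rcases h2b with ⟨hδ, ⟨E, hE⟩⟩ | h
      · have hE' : ∀ k, ‖e k‖ ≤ E := fun k => hE (Set.mem_range_self k)
        refine ppa_pack_sup ξ _ E fun k => ?_
        rw [norm_smul, Real.norm_eq_abs]
        exact mul_le_mul (by linarith [hδ k]) (hE' k) (norm_nonneg _) (by linarith [hξ1 k])
      · exact ppa_pack_sum ξ _ (fun k => norm_nonneg _) h
    · rcases h2c with h | h
      · exact ppa_pack_sup ξ _ ‖p‖ fun k =>
          mul_le_mul_of_nonneg_right (by linarith [h k]) (norm_nonneg p)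
      · exact ppa_pack_sum ξ _ (fun k => mul_nonneg (abs_nonneg _) (norm_nonneg _))
          (h.mul_right ‖p‖)
  · -- case (3)
    have hξ1 : ∀ k, ξ k ≤ 1 := fun k => by have := h3a k; have := abs_nonneg (α k); linarith
    refine ppa_aux_main (fun k => ‖x k - p‖) ξ (fun k => |α k| * ‖u - p‖)
      (fun k => ‖δ k • e k‖) (fun k => |1 - α k - β k - γ k| * ‖p‖) hξ0 hξ1 ?_ ?_ ?_ hrecB
    · exact ppa_pack_sup ξ _ ‖u - p‖ fun k =>
        mul_le_mul_of_nonneg_right (by linarith [h3a k]) (norm_nonneg _)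
    · exact ppa_pack_sum ξ _ (fun k => norm_nonneg _) h3c
    · exact ppa_pack_sum ξ _ (fun k => mul_nonneg (abs_nonneg _) (norm_nonneg _))
        (h3b.mul_right ‖p‖)
  · -- case (4)
    have hξ1 : ∀ k, ξ k ≤ 1 := fun k => by have := h4a k; have := abs_nonneg (δ k); linarith
    have hE' : ∀ k, ‖e k‖ ≤ E := fun k => hE (Set.mem_range_self k)
    refine ppa_aux_main (fun k => ‖x k - p‖) ξ (fun k => |α k| * ‖u‖)
      (fun k => |δ k| * ‖e k - p‖) (fun k => |1 - β k - γ k - δ k| * ‖p‖) hξ0 hξ1 ?_ ?_ ?_ hrecC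
    · exact ppa_pack_sum ξ _ (fun k => mul_nonneg (abs_nonneg _) (norm_nonneg _))
        (h4d.mul_right ‖u‖)
    · refine ppa_pack_sup ξ _ (E + ‖p‖) fun k => ?_
      have h1 : ‖e k - p‖ ≤ E + ‖p‖ := le_trans (norm_sub_le _ _) (by linarith [hE' k])
      have h0E : (0:ℝ) ≤ E + ‖p‖ := le_trans (norm_nonneg _) h1
      exact mul_le_mul (by linarith [h4a k]) h1 (norm_nonneg _) (by linarith [hξ1 k])
    · exact ppa_pack_sum ξ _ (fun k => mul_nonneg (abs_nonneg _) (norm_nonneg _))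
        (h4c.mul_right ‖p‖)
end

section
/- Suppose that zer A ≠ ∅, that for every k ∈ ℕ, α_k ∈ (0,1] and α_k + ξ_k ≤ 1, and that δ_k e_k / α_k → 0 strongly and (1 − α_k − β_k − γ_k)/α_k → 0. Then the sequence (x_k)_{k∈ℕ} is bounded. -/
open Filter InnerProductSpace

/-- Proposition 3.4: boundedness of the generalized proximal point algorithm iterates when
`zer A ≠ ∅`, `α_k ∈ (0,1]`, `α_k + ξ_k ≤ 1`, `δ_k e_k / α_k → 0`, and
`(1 - α_k - β_k - γ_k)/α_k → 0` (with `ξ_k := |β_k + γ_k/2| + |γ_k/2|`). -/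
theorem stmt9 {H : Type*} [NormedAddCommGroup H] [InnerProductSpace ℝ H] [CompleteSpace H]
    (A : H → Set H)
    (hmono : ∀ x y xu yv : H, xu ∈ A x → yv ∈ A y → 0 ≤ ⟪x - y, xu - yv⟫_ℝ)
    (hmax : ∀ x xu : H, (∀ y yv : H, yv ∈ A y → 0 ≤ ⟪x - y, xu - yv⟫_ℝ) → xu ∈ A x)
    (J : ℝ → H → H)
    (hJ : ∀ c : ℝ, 0 < c → ∀ x : H, (1 / c) • (x - J c x) ∈ A (J c x))
    (u : H) (e : ℕ → H) (c α β γ δ : ℕ → ℝ) (hc : ∀ k, 0 < c k)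
    (x : ℕ → H)
    (hrec : ∀ k, x (k + 1) = α k • u + β k • x k + γ k • J (c k) (x k) + δ k • e k)
    (ξ : ℕ → ℝ) (hξ : ∀ k, ξ k = |β k + γ k / 2| + |γ k / 2|)
    (hzer : ∃ p : H, (0 : H) ∈ A p)
    (hα : ∀ k, 0 < α k ∧ α k ≤ 1) (hαξ : ∀ k, α k + ξ k ≤ 1)
    (hde : Tendsto (fun k => (α k)⁻¹ • (δ k • e k)) atTop (nhds (0 : H)))
    (hφ : Tendsto (fun k => (1 - α k - β k - γ k) / α k) atTop (nhds 0)) :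
    Bornology.IsBounded (Set.range x) := by
  obtain ⟨p, hp⟩ := hzer
  -- key monotonicity inequality at the iterates
  have hkey : ∀ k, 0 ≤ ⟪J (c k) (x k) - p, x k - J (c k) (x k)⟫_ℝ := by
    intro k
    have h1 := hJ (c k) (hc k) (x k)
    have h2 := hmono (J (c k) (x k)) p _ 0 h1 hp
    rw [sub_zero, real_inner_smul_right] at h2
    have hcpos : 0 < 1 / c k := one_div_pos.mpr (hc k)
    nlinarith [h2]
  -- reflected resolvent inequality
  have hrefl : ∀ k, ‖(2:ℝ) • J (c k) (x k) - x k - p‖ ≤ ‖x k - p‖ := by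
    intro k
    set q := J (c k) (x k) with hq
    have e1 : (2:ℝ) • q - x k - p = (q - p) - (x k - q) := by module
    have e2 : x k - p = (q - p) + (x k - q) := by abel
    have h1 : ‖(q - p) - (x k - q)‖ ^ 2
        = ‖q - p‖ ^ 2 - 2 * ⟪q - p, x k - q⟫_ℝ + ‖x k - q‖ ^ 2 := by
      rw [@norm_sub_sq_real]
    have h2 : ‖(q - p) + (x k - q)‖ ^ 2
        = ‖q - p‖ ^ 2 + 2 * ⟪q - p, x k - q⟫_ℝ + ‖x k - q‖ ^ 2 := by
      rw [@norm_add_sq_real]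
    have hk := hkey k
    rw [e1, e2]
    nlinarith [norm_nonneg ((q - p) - (x k - q)), norm_nonneg ((q - p) + (x k - q))]
  -- bounds on the perturbation sequences
  obtain ⟨M1, hM1⟩ : ∃ M1 : ℝ, ∀ k, ‖(α k)⁻¹ • (δ k • e k)‖ ≤ M1 := by
    have := (hde.norm).bddAbove_range
    obtain ⟨M, hM⟩ := this
    exact ⟨M, fun k => hM ⟨k, rfl⟩⟩
  obtain ⟨M2, hM2⟩ : ∃ M2 : ℝ, ∀ k, |(1 - α k - β k - γ k) / α k| ≤ M2 := by
    have := (hφ.abs).bddAbove_range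
    obtain ⟨M, hM⟩ := this
    exact ⟨M, fun k => hM ⟨k, rfl⟩⟩
  set C : ℝ := ‖u - p‖ + M1 + M2 * ‖p‖ with hC
  -- one-step estimate
  have hstep : ∀ k, ‖x (k + 1) - p‖ ≤ (1 - α k) * ‖x k - p‖ + α k * C := by
    intro k
    obtain ⟨hα0, hα1⟩ := hα k
    have hdecomp : x (k + 1) - p
        = α k • (u - p) + (β k + γ k / 2) • (x k - p)
          + (γ k / 2) • ((2:ℝ) • J (c k) (x k) - x k - p)
          + δ k • e k + (α k + β k + γ k - 1) • p := by
      rw [hrec]; module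
    have hnorm : ‖x (k + 1) - p‖ ≤ α k * ‖u - p‖ + |β k + γ k / 2| * ‖x k - p‖
        + |γ k / 2| * ‖(2:ℝ) • J (c k) (x k) - x k - p‖
        + ‖δ k • e k‖ + |α k + β k + γ k - 1| * ‖p‖ := by
      rw [hdecomp]
      set a1 := α k • (u - p)
      set a2 := (β k + γ k / 2) • (x k - p)
      set a3 := (γ k / 2) • ((2:ℝ) • J (c k) (x k) - x k - p)
      set a4 := δ k • e k
      set a5 := (α k + β k + γ k - 1) • p
      have t1 := norm_add_le (a1 + a2 + a3 + a4) a5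
      have t2 := norm_add_le (a1 + a2 + a3) a4
      have t3 := norm_add_le (a1 + a2) a3
      have t4 := norm_add_le a1 a2
      have n1 : ‖a1‖ = α k * ‖u - p‖ := by
        rw [norm_smul, Real.norm_eq_abs, abs_of_pos hα0]
      have n2 : ‖a2‖ = |β k + γ k / 2| * ‖x k - p‖ := by
        rw [norm_smul, Real.norm_eq_abs]
      have n3 : ‖a3‖ = |γ k / 2| * ‖(2:ℝ) • J (c k) (x k) - x k - p‖ := by
        rw [norm_smul, Real.norm_eq_abs]
      have n5 : ‖a5‖ = |α k + β k + γ k - 1| * ‖p‖ := by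
        rw [norm_smul, Real.norm_eq_abs]
      linarith [t1, t2, t3, t4, n1.le, n2.le, n3.le, n5.le, n1.ge, n2.ge, n3.ge, n5.ge]
    have hde' : ‖δ k • e k‖ ≤ α k * M1 := by
      have : δ k • e k = α k • ((α k)⁻¹ • (δ k • e k)) := by
        rw [smul_smul, mul_inv_cancel₀ hα0.ne', one_smul]
      rw [this, norm_smul, Real.norm_eq_abs, abs_of_pos hα0]
      exact mul_le_mul_of_nonneg_left (hM1 k) hα0.le
    have hφ' : |α k + β k + γ k - 1| ≤ α k * M2 := by
      have h := hM2 k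
      rw [abs_div, abs_of_pos hα0, div_le_iff₀ hα0] at h
      calc |α k + β k + γ k - 1| = |1 - α k - β k - γ k| := by rw [abs_sub_comm]; ring_nf
        _ ≤ M2 * α k := h
        _ = α k * M2 := by ring
    have hξk : |β k + γ k / 2| + |γ k / 2| ≤ 1 - α k := by
      have := hαξ k
      rw [hξ k] at this
      linarith
    have hr := hrefl k
    have hxp : (0:ℝ) ≤ ‖x k - p‖ := norm_nonneg _
    have hab : (0:ℝ) ≤ |β k + γ k / 2| := abs_nonneg _
    have hab2 : (0:ℝ) ≤ |γ k / 2| := abs_nonneg _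
    have hpn : (0:ℝ) ≤ ‖p‖ := norm_nonneg _
    calc ‖x (k + 1) - p‖ ≤ α k * ‖u - p‖ + |β k + γ k / 2| * ‖x k - p‖
        + |γ k / 2| * ‖(2:ℝ) • J (c k) (x k) - x k - p‖
        + ‖δ k • e k‖ + |α k + β k + γ k - 1| * ‖p‖ := hnorm
      _ ≤ α k * ‖u - p‖ + |β k + γ k / 2| * ‖x k - p‖ + |γ k / 2| * ‖x k - p‖
        + α k * M1 + (α k * M2) * ‖p‖ := by
          linarith [mul_le_mul_of_nonneg_left hr hab2, hde',
            mul_le_mul_of_nonneg_right hφ' hpn]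
      _ ≤ (1 - α k) * ‖x k - p‖ + α k * C := by
          rw [hC]; nlinarith [mul_le_mul_of_nonneg_right hξk hxp]
  -- boundedness by induction
  set D : ℝ := max ‖x 0 - p‖ C with hD
  have hCD : C ≤ D := le_max_right _ _
  have hbound : ∀ k, ‖x k - p‖ ≤ D := by
    intro k
    induction k with
    | zero => exact le_max_left _ _
    | succ n ih =>
      obtain ⟨hα0, hα1⟩ := hα n
      have h := hstep n
      nlinarith [h, ih, hCD]
  refine (Metric.isBounded_closedBall (x := p) (r := D)).subset ?_
  rintro _ ⟨k, rfl⟩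
  rw [Metric.mem_closedBall, dist_eq_norm]
  exact hbound k
end

section
/- Suppose that the sequence (x_k)_{k∈ℕ} is bounded, that β_k + γ_k ≤ 1 for every k ∈ ℕ, that α_k → 0, limsup_{k→∞} |β_k| < 1, 1 − α_k − β_k − γ_k → 0, 0 < liminf_{k→∞} (1 − β_k − γ_k/2) ≤ limsup_{k→∞} (1 − β_k − γ_k/2) < 1, δ_k e_k → 0 strongly, and 1 − c_k/c_{k+1} → 0. Then: (1) the sequence (J_{c_k}(x_k))_{k∈ℕ} is bounded; (2) x_k − J_{c_k}(x_k) → 0 strongly; (3) if moreover inf_{k∈ℕ} c_k > 0 or c_k → ∞, then Ω is nonempty and Ω ⊆ zer A. -/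
open Filter InnerProductSpace

/-!
Put `λ_k = 1 - β_k - γ_k / 2`, `θ_k = 1 - β_k - γ_k → 0` and `N_k = 2 J_{c_k} x_k - x_k`. Then
`x_{k+1} = x_k + λ_k (N_k - x_k) + w_k` with `w_k = α_k u + δ_k e_k - θ_k N_k → 0`. The reflected
resolvents `2 J_c - I` are nonexpansive, and the resolvent identity
`J_c x = J_{c'} ((c'/c) x + (1 - c'/c) J_c x)` shows `‖N_{k+1} - N_k‖ ≤ ‖x_{k+1} - x_k‖ + o(1)`
because `c_{k+1} / c_k → 1`. Suzuki's lemma on Krasnoselskii–Mann iterations then gives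
`N_k - x_k = 2 (J_{c_k} x_k - x_k) → 0`; boundedness of `J_{c_k} x_k`, needed for `N_k`, comes first
from `γ_k (J_{c_k} x_k - x_k) = x_{k+1} - x_k + o(1)` with `γ_k` eventually bounded below.

Bounded sequences in a Hilbert space have weak cluster points. Since
`(1 / c_k) (x_k - J_{c_k} x_k) ∈ A (J_{c_k} x_k)` tends strongly to `0` when `1 / c_k` stays
bounded, the weak × strong closedness of the graph of a maximally monotone operator puts every
weak cluster point of `x` in `zer A`.
-/

open Topology

section Suzuki

variable {E : Type*} [NormedAddCommGroup E] [NormedSpace ℝ E] {x z : ℕ → E} {lam : ℕ → ℝ}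

/-- Once `lam ≥ a > 0`, this lower bound grows linearly in `m`: that is what contradicts
boundedness in Suzuki's lemma below. -/
theorem exists_le_norm_sub_of_mann_step {b : ℝ} (hb : b < 1) (m : ℕ) :
    ∃ C, 0 ≤ C ∧ ∀ i R δ, 0 ≤ δ → (∀ k ≥ i, 0 ≤ lam k ∧ lam k ≤ b) →
      (∀ k ≥ i, x (k + 1) = x k + lam k • (z k - x k)) →
      (∀ k ≥ i, ‖z (k + 1) - z k‖ ≤ lam k * R + δ) → R - δ ≤ ‖z (i + m) - x (i + m)‖ →
      (1 + ∑ q ∈ Finset.range m, lam (i + q)) * R - C * δ ≤ ‖z (i + m) - x i‖ := by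
  induction m with
  | zero => exact ⟨1, zero_le_one, fun i R δ _ _ _ _ h => by simpa using h⟩
  | succ m ih =>
    obtain ⟨C, hC0, hC⟩ := ih
    have hb' : 0 < 1 - b := by linarith
    refine ⟨(C + m + 1) / (1 - b), by positivity, fun i R δ hδ hlam hrec hz hlast => ?_⟩
    have hn : i + 1 + m = i + (m + 1) := by omega
    have hIH := hC (i + 1) R δ hδ (fun k hk => hlam k (by omega))
      (fun k hk => hrec k (by omega)) (fun k hk => hz k (by omega)) (by rwa [hn])
    rw [hn] at hIH
    set n := i + (m + 1)
    set S' := ∑ q ∈ Finset.range m, lam (i + 1 + q)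
    obtain ⟨hlam0, hlamb⟩ := hlam i le_rfl
    have hsum : ∑ q ∈ Finset.range (m + 1), lam (i + q) = lam i + S' := by
      rw [Finset.sum_range_succ', add_comm]
      simp only [S', add_assoc, add_comm 1]
      rfl
    have hdrift : ‖z n - z i‖ ≤ (lam i + S') * R + (m + 1) * δ := by
      calc ‖z n - z i‖ = dist (z (i + 0)) (z (i + (m + 1))) := by rw [dist_comm, dist_eq_norm]; rfl
        _ ≤ ∑ q ∈ Finset.range (m + 1), dist (z (i + q)) (z (i + (q + 1))) :=
          dist_le_range_sum_dist (fun q => z (i + q)) (m + 1)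
        _ ≤ ∑ q ∈ Finset.range (m + 1), (lam (i + q) * R + δ) := by
          refine Finset.sum_le_sum fun q _ => ?_
          rw [dist_comm, dist_eq_norm, ← add_assoc]
          exact hz _ (by omega)
        _ = (lam i + S') * R + (m + 1) * δ := by
          rw [Finset.sum_add_distrib, ← Finset.sum_mul, hsum]
          simp
    have hsplit : ‖z n - x (i + 1)‖ ≤ (1 - lam i) * ‖z n - x i‖ + lam i * ‖z n - z i‖ := by
      have : z n - x (i + 1) = (1 - lam i) • (z n - x i) + lam i • (z n - z i) := by
        rw [hrec i le_rfl]; module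
      rw [this]
      refine (norm_add_le _ _).trans_eq ?_
      rw [norm_smul, norm_smul, Real.norm_of_nonneg (by linarith), Real.norm_of_nonneg hlam0]
    set X := (C + m + 1) / (1 - b) * δ
    have hX : (1 - b) * X = (C + m + 1) * δ := by simp only [X]; field_simp
    have hdrift' := mul_le_mul_of_nonneg_left hdrift hlam0
    have hX_le : (1 - b) * X ≤ (1 - lam i) * X :=
      mul_le_mul_of_nonneg_right (by linarith) (by positivity)
    have hδ_le : lam i * ((m + 1) * δ) ≤ (m + 1) * δ :=
      mul_le_of_le_one_left (by positivity) (by linarith)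
    refine le_of_mul_le_mul_left ?_ (show 0 < 1 - lam i by linarith)
    rw [hsum]
    linarith

/-- Suzuki's lemma (T. Suzuki, 2005). -/
theorem tendsto_norm_sub_of_mann_step {a b M : ℝ} (ha : 0 < a) (hb : b < 1)
    (hlam : ∀ᶠ k in atTop, a ≤ lam k ∧ lam k ≤ b)
    (hrec : ∀ᶠ k in atTop, x (k + 1) = x k + lam k • (z k - x k))
    (hx : ∀ᶠ k in atTop, ‖x k‖ ≤ M) (hz : ∀ᶠ k in atTop, ‖z k‖ ≤ M)
    (hzx : ∀ ε > 0, ∀ᶠ k in atTop, ‖z (k + 1) - z k‖ ≤ ‖x (k + 1) - x k‖ + ε) :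
    Tendsto (fun k => ‖z k - x k‖) atTop (𝓝 0) := by
  set r := fun k => ‖z k - x k‖
  have hbdd : IsBoundedUnder (· ≤ ·) atTop r := by
    refine isBoundedUnder_of_eventually_le (a := 2 * M) ?_
    filter_upwards [hx, hz] with k hxk hzk
    exact (norm_sub_le _ _).trans (by linarith)
  have hcobdd : IsCoboundedUnder (· ≤ ·) atTop r :=
    isCoboundedUnder_le_of_le atTop fun k => norm_nonneg (z k - x k)
  set L := limsup r atTop
  rcases le_or_gt L 0 with hL | hL
  · exact tendsto_order.2 ⟨fun ε hε => .of_forall fun k => hε.trans_le (norm_nonneg _),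
      fun ε hε => eventually_lt_of_limsup_lt (hL.trans_lt hε) hbdd⟩
  exfalso
  obtain ⟨j, hj⟩ := exists_nat_gt (2 * M / (a * L))
  have hgap : 2 * M < (1 + j * a) * L := by
    rw [div_lt_iff₀ (by positivity)] at hj
    nlinarith
  obtain ⟨C, hC0, hC⟩ := exists_le_norm_sub_of_mann_step (x := x) (z := z) (lam := lam) hb j
  set δ := ((1 + j * a) * L - 2 * M) / (C + 1)
  have hδ : 0 < δ := div_pos (by linarith) (by linarith)
  have hCδ : C * δ < (1 + j * a) * L - 2 * M := by
    have : (C + 1) * δ = (1 + j * a) * L - 2 * M := by simp only [δ]; field_simp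
    linarith
  obtain ⟨N, hN⟩ := eventually_atTop.1 <| hlam.and <| hrec.and <|
    (hzx (δ / 2) (by positivity)).and <|
    (eventually_lt_of_limsup_lt (show L < L + δ / 2 by linarith) hbdd).and (hx.and hz)
  obtain ⟨n, hnN, hn⟩ := frequently_atTop.1
    (frequently_lt_of_lt_limsup hcobdd (show L - δ / 2 < L by linarith)) (N + j)
  obtain ⟨i, rfl⟩ : ∃ i, n = i + j := ⟨n - j, by omega⟩
  have hkey := hC i (L + δ / 2) δ hδ.le
    (fun k hk => ⟨ha.le.trans (hN k (by omega)).1.1, (hN k (by omega)).1.2⟩)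
    (fun k hk => (hN k (by omega)).2.1)
    (fun k hk => by
      obtain ⟨⟨hak, -⟩, hreck, hzk, hrk, -⟩ := hN k (by omega)
      rw [hreck, add_sub_cancel_left, norm_smul, Real.norm_of_nonneg (ha.le.trans hak)] at hzk
      nlinarith [mul_le_mul_of_nonneg_left hrk.le (ha.le.trans hak)])
    (by linarith)
  have hsum : j * a ≤ ∑ q ∈ Finset.range j, lam (i + q) := by
    simpa using Finset.sum_le_sum fun q (_ : q ∈ Finset.range j) => (hN (i + q) (by omega)).1.1
  have hfar : ‖z (i + j) - x i‖ ≤ 2 * M := by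
    obtain ⟨-, -, -, -, -, hzn⟩ := hN (i + j) (by omega)
    obtain ⟨-, -, -, -, hxi, -⟩ := hN i (by omega)
    exact (norm_sub_le _ _).trans (by linarith)
  have : (1 + j * a) * L ≤ (1 + ∑ q ∈ Finset.range j, lam (i + q)) * (L + δ / 2) :=
    mul_le_mul (by linarith) (by linarith) hL.le (by nlinarith)
  linarith

theorem tendsto_sub_of_perturbed_mann_step {a b : ℝ} (ha : 0 < a) (hb : b < 1) {v w : ℕ → E}
    (hlam : ∀ᶠ k in atTop, a ≤ lam k ∧ lam k ≤ b)
    (hrec : ∀ k, x (k + 1) = x k + lam k • (v k - x k) + w k)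
    (hw : Tendsto w atTop (𝓝 0))
    (hx : Bornology.IsBounded (Set.range x)) (hv : Bornology.IsBounded (Set.range v))
    (hvx : ∀ ε > 0, ∀ᶠ k in atTop, ‖v (k + 1) - v k‖ ≤ ‖x (k + 1) - x k‖ + ε) :
    Tendsto (fun k => v k - x k) atTop (𝓝 0) := by
  set t := fun k => (lam k)⁻¹ • w k
  have ht : Tendsto t atTop (𝓝 0) := by
    refine IsBoundedUnder.smul_tendsto_zero (isBoundedUnder_of_eventually_le (a := a⁻¹) ?_) hw
    filter_upwards [hlam] with k hk
    rw [Function.comp_apply, norm_inv, Real.norm_of_nonneg (ha.le.trans hk.1)]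
    exact inv_anti₀ ha hk.1
  obtain ⟨Mx, hMx⟩ := isBounded_iff_forall_norm_le.1 hx
  obtain ⟨Mv, hMv⟩ := isBounded_iff_forall_norm_le.1 hv
  have hxM : ∀ k, ‖x k‖ ≤ Mx := fun k => hMx _ ⟨k, rfl⟩
  have hvM : ∀ k, ‖v k‖ ≤ Mv := fun k => hMv _ ⟨k, rfl⟩
  have ht_small : ∀ ε > 0, ∀ᶠ k in atTop, ‖t k‖ < ε := fun ε hε =>
    ht.norm.eventually (gt_mem_nhds (by simpa using hε))
  have hzx : Tendsto (fun k => ‖(v k + t k) - x k‖) atTop (𝓝 0) := by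
    refine tendsto_norm_sub_of_mann_step (M := Mx + Mv + 1) ha hb hlam ?_
      (.of_forall fun k => by linarith [hxM k, norm_nonneg (v 0), hvM 0]) ?_ ?_
    · filter_upwards [hlam] with k hk
      rw [hrec k]
      simp only [t, smul_sub, smul_add, smul_smul, mul_inv_cancel₀ (ha.trans_le hk.1).ne', one_smul]
      abel
    · filter_upwards [ht_small 1 one_pos] with k hk
      linarith [norm_add_le (v k) (t k), hvM k, norm_nonneg (x 0), hxM 0]
    · intro ε hε
      filter_upwards [hvx (ε / 2) (by positivity), ht_small (ε / 4) (by positivity),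
        (tendsto_add_atTop_nat 1).eventually (ht_small (ε / 4) (by positivity))] with k hk htk htk'
      have : v (k + 1) + t (k + 1) - (v k + t k) = (v (k + 1) - v k) + (t (k + 1) - t k) := by abel
      rw [this]
      linarith [norm_add_le (v (k + 1) - v k) (t (k + 1) - t k), norm_sub_le (t (k + 1)) (t k)]
  simpa using ((tendsto_zero_iff_norm_tendsto_zero.2 hzx).sub ht).congr
    (f₂ := fun k => v k - x k) fun k => by abel

end Suzuki

theorem isBounded_range_of_eventually_norm_le {E : Type*} [SeminormedAddCommGroup E]
    {y : ℕ → E} {M : ℝ} (h : ∀ᶠ k in atTop, ‖y k‖ ≤ M) : Bornology.IsBounded (Set.range y) := by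
  rw [← Nat.cofinite_eq_atTop] at h
  obtain ⟨C, hC⟩ := IsBoundedUnder.bddAbove_range_of_cofinite ⟨M, h⟩
  exact isBounded_iff_forall_norm_le.2 ⟨C, by rintro _ ⟨k, rfl⟩; exact hC ⟨k, rfl⟩⟩

theorem tendsto_one_sub_div_succ {c : ℕ → ℝ}
    (h : Tendsto (fun k => 1 - c k / c (k + 1)) atTop (𝓝 0)) :
    Tendsto (fun k => 1 - c (k + 1) / c k) atTop (𝓝 0) := by
  have hq : Tendsto (fun k => c k / c (k + 1)) atTop (𝓝 1) := by
    simpa using tendsto_const_nhds (x := (1 : ℝ)).sub h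
  simpa [inv_div] using tendsto_const_nhds (x := (1 : ℝ)).sub (hq.inv₀ one_ne_zero)

section RelaxedStep

variable {E : Type*} [NormedAddCommGroup E] [NormedSpace ℝ E] {x y e : ℕ → E} {u : E}
  {α β γ δ : ℕ → ℝ}

theorem isBounded_range_of_relaxed_step {a : ℝ} (ha : 0 < a)
    (hrec : ∀ k, x (k + 1) = α k • u + β k • x k + γ k • y k + δ k • e k)
    (hx : Bornology.IsBounded (Set.range x)) (hα : Tendsto α atTop (𝓝 0))
    (hθ : Tendsto (fun k => 1 - β k - γ k) atTop (𝓝 0))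
    (hde : Tendsto (fun k => δ k • e k) atTop (𝓝 0)) (hγ : ∀ᶠ k in atTop, a ≤ γ k) :
    Bornology.IsBounded (Set.range y) := by
  obtain ⟨M, hM⟩ := isBounded_iff_forall_norm_le.1 hx
  have hxM : ∀ k, ‖x k‖ ≤ M := fun k => hM _ ⟨k, rfl⟩
  set s := fun k => (1 - β k - γ k) • x k - α k • u - δ k • e k
  have hs : Tendsto s atTop (𝓝 0) := by
    have hθx := hθ.zero_smul_isBoundedUnder_le (isBoundedUnder_of ⟨M, hxM⟩)
    simpa using (hθx.sub (hα.smul_const u)).sub hde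
  have hstep : ∀ k, γ k • (y k - x k) = (x (k + 1) - x k) + s k := fun k => by
    rw [hrec k]; module
  refine isBounded_range_of_eventually_norm_le (M := M + (2 * M + 1) / a) ?_
  filter_upwards [hγ, hs.norm.eventually (gt_mem_nhds (show ‖(0 : E)‖ < 1 by simp))]
    with k hγk hsk
  have hyx : a * ‖y k - x k‖ ≤ 2 * M + 1 := by
    calc a * ‖y k - x k‖ ≤ ‖γ k • (y k - x k)‖ := by
          rw [norm_smul, Real.norm_of_nonneg (ha.le.trans hγk)]
          exact mul_le_mul_of_nonneg_right hγk (norm_nonneg _)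
      _ ≤ ‖x (k + 1)‖ + ‖x k‖ + ‖s k‖ := by
          rw [hstep]; exact (norm_add_le _ _).trans (by gcongr; exact norm_sub_le _ _)
      _ ≤ 2 * M + 1 := by linarith [hxM (k + 1), hxM k]
  calc ‖y k‖ ≤ ‖x k‖ + ‖y k - x k‖ := norm_le_norm_add_norm_sub' _ _
    _ ≤ M + (2 * M + 1) / a := add_le_add (hxM k) ((le_div_iff₀' ha).2 hyx)

end RelaxedStep

section WeakConvergence

variable {H : Type*} [NormedAddCommGroup H] [InnerProductSpace ℝ H]

def WeakTendsto (y : ℕ → H) (z : H) : Prop :=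
  ∀ w : H, Tendsto (fun k => ⟪y k, w⟫_ℝ) atTop (𝓝 ⟪z, w⟫_ℝ)

/-- Banach–Alaoglu in the separable closed span of the sequence, then Riesz representation there. -/
theorem Bornology.IsBounded.exists_wSeqClusterPt [CompleteSpace H] {x : ℕ → H}
    (hx : IsBounded (Set.range x)) :
    ∃ z, WSeqClusterPt x z := by
  obtain ⟨M, hM⟩ := isBounded_iff_forall_norm_le.1 hx
  set S := (Submodule.span ℝ (Set.range x)).topologicalClosure
  have : TopologicalSpace.SeparableSpace S := by
    have : TopologicalSpace.IsSeparable (S : Set H) := by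
      rw [Submodule.topologicalClosure_coe]
      exact (Set.countable_range x).isSeparable.span.closure
    exact this.separableSpace
  have : CompleteSpace S := (Submodule.isClosed_topologicalClosure _).completeSpace_coe
  let xS : ℕ → S := fun k =>
    ⟨x k, Submodule.le_topologicalClosure _ (Submodule.subset_span ⟨k, rfl⟩)⟩
  obtain ⟨f, -, φ, hφ, hf⟩ := WeakDual.isSeqCompact_closedBall ℝ S 0 M
    (x := fun k => StrongDual.toWeakDual (toDual ℝ S (xS k)))
    fun k => by simpa [xS] using hM _ ⟨k, rfl⟩
  refine ⟨((toDual ℝ S).symm (WeakDual.toStrongDual f) : H), φ, hφ, fun w => ?_⟩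
  have hproj : ∀ s : S, ⟪(s : H), w⟫_ℝ = ⟪s, S.orthogonalProjectionOnto w⟫_ℝ := fun s =>
    (Submodule.inner_orthogonalProjectionOnto_eq_of_mem_left s w).symm
  change Tendsto (fun k => ⟪(xS (φ k) : H), w⟫_ℝ) atTop _
  simp only [hproj, toDual_symm_apply]
  exact ((WeakDual.eval_continuous _).tendsto f).comp hf

end WeakConvergence

section Resolvent

variable {H : Type*} [NormedAddCommGroup H] [InnerProductSpace ℝ H]

def IsMonotoneOperator (A : H → Set H) : Prop :=
  ∀ x y u v : H, u ∈ A x → v ∈ A y → 0 ≤ ⟪x - y, u - v⟫_ℝ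

def IsMaximalMonotone (A : H → Set H) : Prop :=
  IsMonotoneOperator A ∧ ∀ x u : H, (∀ y v : H, v ∈ A y → 0 ≤ ⟪x - y, u - v⟫_ℝ) → u ∈ A x

/-- `J c` is the resolvent `(I + c A)⁻¹` of `c A`. -/
def IsResolventFamily (A : H → Set H) (J : ℝ → H → H) : Prop :=
  ∀ c : ℝ, 0 < c → ∀ x : H, (1 / c) • (x - J c x) ∈ A (J c x)

variable {A : H → Set H} {J : ℝ → H → H} {c : ℝ}

theorem IsResolventFamily.eq_of_mem (hJ : IsResolventFamily A J) (hA : IsMonotoneOperator A)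
    (hc : 0 < c) {p q : H} (h : (1 / c) • (q - p) ∈ A p) : J c q = p := by
  have hmono := hA _ _ _ _ (hJ c hc q) h
  rw [← smul_sub, real_inner_smul_right, show q - J c q - (q - p) = -(J c q - p) by abel,
    inner_neg_right, real_inner_self_eq_norm_sq] at hmono
  have : ‖J c q - p‖ ^ 2 ≤ 0 := by nlinarith [show 0 < 1 / c by positivity]
  simpa [sub_eq_zero] using this

theorem IsResolventFamily.norm_sub_sq_le_inner (hJ : IsResolventFamily A J)
    (hA : IsMonotoneOperator A) (hc : 0 < c) (x y : H) :
    ‖J c x - J c y‖ ^ 2 ≤ ⟪J c x - J c y, x - y⟫_ℝ := by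
  have hmono := hA _ _ _ _ (hJ c hc x) (hJ c hc y)
  rw [← smul_sub, real_inner_smul_right,
    show x - J c x - (y - J c y) = (x - y) - (J c x - J c y) by abel, inner_sub_right,
    real_inner_self_eq_norm_sq] at hmono
  nlinarith [show 0 < 1 / c by positivity]

theorem IsResolventFamily.norm_sub_le_norm_sub (hJ : IsResolventFamily A J)
    (hA : IsMonotoneOperator A) (hc : 0 < c) (x y : H) : ‖J c x - J c y‖ ≤ ‖x - y‖ := by
  have := (hJ.norm_sub_sq_le_inner hA hc x y).trans (real_inner_le_norm _ _)
  nlinarith [norm_nonneg (J c x - J c y), norm_nonneg (x - y)]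

theorem IsResolventFamily.norm_reflection_sub_le (hJ : IsResolventFamily A J)
    (hA : IsMonotoneOperator A) (hc : 0 < c) (x y : H) :
    ‖((2 : ℝ) • J c x - x) - ((2 : ℝ) • J c y - y)‖ ≤ ‖x - y‖ := by
  have hfirm := hJ.norm_sub_sq_le_inner hA hc x y
  rw [show ((2 : ℝ) • J c x - x) - ((2 : ℝ) • J c y - y) = (2 : ℝ) • (J c x - J c y) - (x - y) by
    module]
  refine le_of_pow_le_pow_left₀ two_ne_zero (norm_nonneg _) ?_
  rw [norm_sub_sq_real, norm_smul, real_inner_smul_left]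
  norm_num
  nlinarith

/-- From the resolvent identity `J c x = J c' ((c'/c) x + (1 - c'/c) J c x)`. -/
theorem IsResolventFamily.norm_sub_le_abs_one_sub_div (hJ : IsResolventFamily A J)
    (hA : IsMonotoneOperator A) {c' : ℝ} (hc : 0 < c) (hc' : 0 < c') (x : H) :
    ‖J c' x - J c x‖ ≤ |1 - c' / c| * ‖x - J c x‖ := by
  set q := (c' / c) • x + (1 - c' / c) • J c x
  have hq : J c' q = J c x := by
    refine hJ.eq_of_mem hA hc' ?_
    convert hJ c hc x using 1
    simp only [q, smul_sub, smul_add, smul_smul]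
    match_scalars <;> field_simp
    ring
  calc ‖J c' x - J c x‖ = ‖J c' x - J c' q‖ := by rw [hq]
    _ ≤ ‖x - q‖ := hJ.norm_sub_le_norm_sub hA hc' x q
    _ = |1 - c' / c| * ‖x - J c x‖ := by
      rw [← Real.norm_eq_abs, ← norm_smul]
      congr 1
      module

theorem IsResolventFamily.norm_reflection_sub_reflection_le (hJ : IsResolventFamily A J)
    (hA : IsMonotoneOperator A) {c' : ℝ} (hc : 0 < c) (hc' : 0 < c') (x x' : H) :
    ‖((2 : ℝ) • J c' x' - x') - ((2 : ℝ) • J c x - x)‖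
      ≤ ‖x' - x‖ + 2 * |1 - c' / c| * ‖x - J c x‖ := by
  rw [show ((2 : ℝ) • J c' x' - x') - ((2 : ℝ) • J c x - x)
      = (((2 : ℝ) • J c' x' - x') - ((2 : ℝ) • J c' x - x)) + (2 : ℝ) • (J c' x - J c x) by
    module]
  refine (norm_add_le _ _).trans (add_le_add (hJ.norm_reflection_sub_le hA hc' x' x) ?_)
  rw [norm_smul, Real.norm_two, mul_assoc]
  exact mul_le_mul_of_nonneg_left (hJ.norm_sub_le_abs_one_sub_div hA hc hc' x) zero_le_two

theorem IsMaximalMonotone.mem_of_weakTendsto_of_tendsto (hA : IsMaximalMonotone A)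
    {p q : ℕ → H} {p₀ q₀ : H} (hp : WeakTendsto p p₀) (hpb : Bornology.IsBounded (Set.range p))
    (hq : Tendsto q atTop (𝓝 q₀)) (hpq : ∀ k, q k ∈ A (p k)) : q₀ ∈ A p₀ := by
  refine hA.2 p₀ q₀ fun w v hv => ?_
  obtain ⟨M, hM⟩ := isBounded_iff_forall_norm_le.1 hpb
  have hsmall : Tendsto (fun k => ⟪p k - w, q k - q₀⟫_ℝ) atTop (𝓝 0) := by
    refine squeeze_zero_norm (fun k => (abs_real_inner_le_norm _ _).trans
      (mul_le_mul_of_nonneg_right (norm_sub_le_of_le (hM _ ⟨k, rfl⟩) le_rfl) (norm_nonneg _))) ?_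
    simpa using (tendsto_iff_norm_sub_tendsto_zero.1 hq).const_mul (M + ‖w‖)
  have hweak : Tendsto (fun k => ⟪p k - w, q₀ - v⟫_ℝ) atTop (𝓝 ⟪p₀ - w, q₀ - v⟫_ℝ) := by
    simp only [inner_sub_left]
    exact (hp _).sub tendsto_const_nhds
  refine ge_of_tendsto (by simpa using hsmall.add hweak) (.of_forall fun k => ?_)
  rw [← inner_add_right, sub_add_sub_cancel]
  exact hA.1 _ _ _ _ (hpq k) hv

end Resolvent

section ProximalPoint

variable {H : Type*} [NormedAddCommGroup H] [InnerProductSpace ℝ H] {A : H → Set H}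
  {J : ℝ → H → H} {x e : ℕ → H} {u : H} {c α β γ δ : ℕ → ℝ}

theorem IsResolventFamily.tendsto_sub_of_relaxed_step (hJ : IsResolventFamily A J)
    (hA : IsMonotoneOperator A) (hc : ∀ k, 0 < c k)
    (hrec : ∀ k, x (k + 1) = α k • u + β k • x k + γ k • J (c k) (x k) + δ k • e k)
    (hx : Bornology.IsBounded (Set.range x))
    (hy : Bornology.IsBounded (Set.range fun k => J (c k) (x k)))
    (hα : Tendsto α atTop (𝓝 0)) (hθ : Tendsto (fun k => 1 - β k - γ k) atTop (𝓝 0))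
    (hde : Tendsto (fun k => δ k • e k) atTop (𝓝 0)) {a b : ℝ} (ha : 0 < a) (hb : b < 1)
    (hlam : ∀ᶠ k in atTop, a ≤ 1 - β k - γ k / 2 ∧ 1 - β k - γ k / 2 ≤ b)
    (hcr : Tendsto (fun k => 1 - c (k + 1) / c k) atTop (𝓝 0)) :
    Tendsto (fun k => x k - J (c k) (x k)) atTop (𝓝 0) := by
  obtain ⟨Mx, hMx⟩ := isBounded_iff_forall_norm_le.1 hx
  obtain ⟨My, hMy⟩ := isBounded_iff_forall_norm_le.1 hy
  have hxM : ∀ k, ‖x k‖ ≤ Mx := fun k => hMx _ ⟨k, rfl⟩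
  have hyM : ∀ k, ‖J (c k) (x k)‖ ≤ My := fun k => hMy _ ⟨k, rfl⟩
  -- A Krasnoselskii–Mann step with relaxation `1 - β - γ / 2` on the reflected resolvents `N k`.
  set N := fun k => (2 : ℝ) • J (c k) (x k) - x k
  have hNM : ∀ k, ‖N k‖ ≤ 2 * My + Mx := fun k => by
    refine (norm_sub_le _ _).trans ?_
    rw [norm_smul, Real.norm_two]
    linarith [hyM k, hxM k]
  have hw : Tendsto (fun k => α k • u + δ k • e k - (1 - β k - γ k) • N k) atTop (𝓝 0) := by
    simpa using ((hα.smul_const u).add hde).sub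
      (hθ.zero_smul_isBoundedUnder_le (isBoundedUnder_of ⟨_, hNM⟩))
  have hNx : ∀ ε > 0, ∀ᶠ k in atTop, ‖N (k + 1) - N k‖ ≤ ‖x (k + 1) - x k‖ + ε := by
    intro ε hε
    have hsmall : ∀ᶠ k in atTop, |1 - c (k + 1) / c k| * (2 * (Mx + My) + 1) < ε := by
      have := (hcr.abs.mul_const (2 * (Mx + My) + 1)).eventually (gt_mem_nhds (by simpa using hε))
      simpa using this
    filter_upwards [hsmall] with k hk
    refine (hJ.norm_reflection_sub_reflection_le hA (hc k) (hc (k + 1)) (x k) (x (k + 1))).trans ?_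
    have : ‖x k - J (c k) (x k)‖ ≤ Mx + My := norm_sub_le_of_le (hxM k) (hyM k)
    nlinarith [abs_nonneg (1 - c (k + 1) / c k)]
  have hNx0 := tendsto_sub_of_perturbed_mann_step ha hb hlam (fun k => by rw [hrec k]; module) hw hx
    (isBounded_iff_forall_norm_le.2 ⟨_, by rintro _ ⟨k, rfl⟩; exact hNM k⟩) hNx
  simpa using (hNx0.const_smul (-2⁻¹ : ℝ)).congr (f₂ := fun k => x k - J (c k) (x k))
    fun k => by module

theorem IsMaximalMonotone.zero_mem_of_wSeqClusterPt (hA : IsMaximalMonotone A)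
    (hJ : IsResolventFamily A J) (hc : ∀ k, 0 < c k)
    (hxy : Tendsto (fun k => x k - J (c k) (x k)) atTop (𝓝 0))
    (hy : Bornology.IsBounded (Set.range fun k => J (c k) (x k)))
    (hc' : IsBoundedUnder (· ≤ ·) atTop fun k => ‖1 / c k‖) {z : H} (hz : WSeqClusterPt x z) :
    (0 : H) ∈ A z := by
  obtain ⟨φ, hφ, hxz⟩ := hz
  obtain ⟨M, hM⟩ := hc'
  have hxyφ := hxy.comp hφ.tendsto_atTop
  refine hA.mem_of_weakTendsto_of_tendsto (p := fun k => J (c (φ k)) (x (φ k)))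
    (q := fun k => (1 / c (φ k)) • (x (φ k) - J (c (φ k)) (x (φ k)))) (fun w => ?_)
    (hy.subset (Set.range_comp_subset_range φ fun k => J (c k) (x k)))
    (IsBoundedUnder.smul_tendsto_zero ⟨M, hφ.tendsto_atTop.eventually hM⟩ hxyφ)
    fun k => hJ _ (hc _) _
  have hsmall : Tendsto (fun k => ⟪x (φ k) - J (c (φ k)) (x (φ k)), w⟫_ℝ) atTop (𝓝 0) := by
    simpa using hxyφ.inner (tendsto_const_nhds (x := w))
  simpa [inner_sub_left] using (hxz w).sub hsmall

end ProximalPoint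

theorem stmt11_general {H : Type*} [NormedAddCommGroup H] [InnerProductSpace ℝ H] [CompleteSpace H]
    (A : H → Set H)
    (hmono : ∀ x y xu yv : H, xu ∈ A x → yv ∈ A y → 0 ≤ ⟪x - y, xu - yv⟫_ℝ)
    (hmax : ∀ x xu : H, (∀ y yv : H, yv ∈ A y → 0 ≤ ⟪x - y, xu - yv⟫_ℝ) → xu ∈ A x)
    (J : ℝ → H → H)
    (hJ : ∀ c : ℝ, 0 < c → ∀ x : H, (1 / c) • (x - J c x) ∈ A (J c x))
    (u : H) (e : ℕ → H) (c α β γ δ : ℕ → ℝ) (hc : ∀ k, 0 < c k)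
    (x : ℕ → H)
    (hrec : ∀ k, x (k + 1) = α k • u + β k • x k + γ k • J (c k) (x k) + δ k • e k)
    (hxbdd : Bornology.IsBounded (Set.range x))
    (hα0 : Tendsto α atTop (nhds 0))
    (hφ0 : Tendsto (fun k => 1 - α k - β k - γ k) atTop (nhds 0))
    (hliminf : ∃ a > (0 : ℝ), ∀ᶠ k in atTop, a ≤ 1 - β k - γ k / 2)
    (hlimsup : ∃ b < (1 : ℝ), ∀ᶠ k in atTop, 1 - β k - γ k / 2 ≤ b)
    (hde0 : Tendsto (fun k => δ k • e k) atTop (nhds (0 : H)))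
    (hcratio : Tendsto (fun k => 1 - c k / c (k + 1)) atTop (nhds 0)) :
    Bornology.IsBounded (Set.range fun k => J (c k) (x k)) ∧
      Tendsto (fun k => x k - J (c k) (x k)) atTop (nhds (0 : H)) ∧
      (((∃ ε > (0 : ℝ), ∀ k, ε ≤ c k) ∨ Tendsto c atTop atTop) →
        (∃ z : H, WSeqClusterPt x z) ∧
          ∀ z : H, WSeqClusterPt x z → (0 : H) ∈ A z) := by
  obtain ⟨a, ha, hlama⟩ := hliminf
  obtain ⟨b, hb, hlamb⟩ := hlimsup
  have hθ : Tendsto (fun k => 1 - β k - γ k) atTop (𝓝 0) := by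
    simpa using (hφ0.add hα0).congr (f₂ := fun k => 1 - β k - γ k) fun k => by ring
  have hγ : ∀ᶠ k in atTop, a ≤ γ k := by
    filter_upwards [hlama, hθ.eventually (gt_mem_nhds (half_pos ha))] with k hlamk hθk
    linarith
  have hy := isBounded_range_of_relaxed_step ha hrec hxbdd hα0 hθ hde0 hγ
  have hxy := IsResolventFamily.tendsto_sub_of_relaxed_step hJ hmono hc hrec hxbdd hy hα0 hθ hde0
    ha hb (hlama.and hlamb) (tendsto_one_sub_div_succ hcratio)
  refine ⟨hy, hxy, fun hcs => ⟨hxbdd.exists_wSeqClusterPt, fun z hz => ?_⟩⟩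
  refine IsMaximalMonotone.zero_mem_of_wSeqClusterPt ⟨hmono, hmax⟩ hJ hc hxy hy ?_ hz
  rcases hcs with ⟨ε, hε, hεc⟩ | hctop
  · refine isBoundedUnder_of ⟨1 / ε, fun k => ?_⟩
    rw [Real.norm_of_nonneg (one_div_pos.2 (hc k)).le]
    exact one_div_le_one_div_of_le hε (hεc k)
  · simpa using (tendsto_inv_atTop_zero.comp hctop).norm.isBoundedUnder_le

/-- Proposition 3.7: asymptotic regularity of the generalized proximal point algorithm:
if `(x_k)` is bounded, `β_k + γ_k ≤ 1`, `α_k → 0`, `limsup |β_k| < 1`,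
`1 - α_k - β_k - γ_k → 0`, `0 < liminf (1-β_k-γ_k/2) ≤ limsup (1-β_k-γ_k/2) < 1`,
`δ_k e_k → 0`, and `1 - c_k/c_{k+1} → 0`, then `(J_{c_k}(x_k))` is bounded,
`x_k - J_{c_k}(x_k) → 0`, and (if `inf c_k > 0` or `c_k → ∞`) the weak sequential cluster
points of `(x_k)` form a nonempty subset of `zer A`. -/
theorem stmt11 {H : Type*} [NormedAddCommGroup H] [InnerProductSpace ℝ H] [CompleteSpace H]
    (A : H → Set H)
    (hmono : ∀ x y xu yv : H, xu ∈ A x → yv ∈ A y → 0 ≤ ⟪x - y, xu - yv⟫_ℝ)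
    (hmax : ∀ x xu : H, (∀ y yv : H, yv ∈ A y → 0 ≤ ⟪x - y, xu - yv⟫_ℝ) → xu ∈ A x)
    (J : ℝ → H → H)
    (hJ : ∀ c : ℝ, 0 < c → ∀ x : H, (1 / c) • (x - J c x) ∈ A (J c x))
    (u : H) (e : ℕ → H) (c α β γ δ : ℕ → ℝ) (hc : ∀ k, 0 < c k)
    (x : ℕ → H)
    (hrec : ∀ k, x (k + 1) = α k • u + β k • x k + γ k • J (c k) (x k) + δ k • e k)
    (hxbdd : Bornology.IsBounded (Set.range x))
    (hβγ : ∀ k, β k + γ k ≤ 1)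
    (hα0 : Tendsto α atTop (nhds 0))
    (hβlimsup : ∃ r < (1 : ℝ), ∀ᶠ k in atTop, |β k| ≤ r)
    (hφ0 : Tendsto (fun k => 1 - α k - β k - γ k) atTop (nhds 0))
    (hliminf : ∃ a > (0 : ℝ), ∀ᶠ k in atTop, a ≤ 1 - β k - γ k / 2)
    (hlimsup : ∃ b < (1 : ℝ), ∀ᶠ k in atTop, 1 - β k - γ k / 2 ≤ b)
    (hde0 : Tendsto (fun k => δ k • e k) atTop (nhds (0 : H)))
    (hcratio : Tendsto (fun k => 1 - c k / c (k + 1)) atTop (nhds 0)) :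
    Bornology.IsBounded (Set.range fun k => J (c k) (x k)) ∧
      Tendsto (fun k => x k - J (c k) (x k)) atTop (nhds (0 : H)) ∧
      (((∃ ε > (0 : ℝ), ∀ k, ε ≤ c k) ∨ Tendsto c atTop atTop) →
        (∃ z : H, WSeqClusterPt x z) ∧
          ∀ z : H, WSeqClusterPt x z → (0 : H) ∈ A z) :=
  stmt11_general A hmono hmax J hJ u e c α β γ δ hc x hrec hxbdd hα0 hφ0 hliminf hlimsup hde0
    hcratio
end

section
/- Suppose that zer A ≠ ∅, that for every k ∈ ℕ, ξ_k ≤ 1 and γ_k(β_k + γ_k) ≥ 0, and that ∑_k |α_k| < ∞, ∑_k |1 − β_k − γ_k| < ∞ and ∑_k ‖δ_k e_k‖ < ∞. Then: (1) ∑_{k=0}^{∞} γ_k(2β_k + γ_k)‖x_k − J_{c_k}(x_k)‖² < ∞; (2) if ∑_k γ_k(2β_k + γ_k) = ∞ and inf_{k∈ℕ} γ_k(2β_k + γ_k) ≥ 0, then liminf_{k→∞} ‖x_k − J_{c_k}(x_k)‖ = 0; (3) if liminf_{k→∞} γ_k(2β_k + γ_k) > 0, then x_k − J_{c_k}(x_k)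 → 0 strongly; (4) if liminf_{k→∞} γ_k(2β_k + γ_k) > 0 and (inf_{k∈ℕ} c_k > 0 or c_k → ∞), then Ω is nonempty and Ω ⊆ zer A. -/
/-!
Fix `p ∈ zer A` and write `d_k = x_k - J_{c_k}(x_k)`. Monotonicity of `A` between `J_{c_k}(x_k)`
and `p` gives `‖d_k‖² ≤ ⟪x_k - p, d_k⟫`. Hence the reflection `x_k - p - 2 d_k` is no longer than
`x_k - p`, so the unperturbed step `β_k (x_k - p) + γ_k (J_{c_k}(x_k) - p)`, an affine combination
of `x_k - p` and that reflection, has norm at most `ξ_k ‖x_k - p‖`; expanding its square instead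
shows that it decreases `‖x_k - p‖²` by `γ_k (2β_k + γ_k) ‖d_k‖²`. The perturbations are
summable, so `‖x_k - p‖` stays bounded and the decreases telescope to (1); (2) and (3) follow
from (1) for series of reals. For (4), bounded sequences have weak cluster points, and along a
weakly convergent subsequence `J_{c_k}(x_k) ⇀ z` while `d_k / c_k ∈ A(J_{c_k}(x_k))` tends to
`0` strongly, which puts `0 ∈ A z` by maximality.
-/

open Filter InnerProductSpace

open Finset Topology

theorem frequently_lt_of_sum_mul_bddAbove {s q : ℕ → ℝ} (hs : ∀ k, 0 ≤ s k) (hq : ∀ k, 0 ≤ q k)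
    (hsum : Tendsto (fun n => ∑ k ∈ range n, s k) atTop atTop)
    (hB : BddAbove (Set.range fun n => ∑ k ∈ range n, s k * q k)) {ε : ℝ} (hε : 0 < ε) :
    ∃ᶠ k in atTop, q k < ε := by
  obtain ⟨B, hB⟩ := hB
  intro hge
  obtain ⟨N, hN⟩ := eventually_atTop.1 hge
  have htail (n : ℕ) : ε * ∑ k ∈ Ico N n, s k ≤ B := calc
    ε * ∑ k ∈ Ico N n, s k ≤ ∑ k ∈ Ico N n, s k * q k := by
      rw [mul_sum]
      refine sum_le_sum fun k hk => ?_
      nlinarith [hs k, not_lt.1 (hN k (mem_Ico.1 hk).1)]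
    _ ≤ ∑ k ∈ range n, s k * q k :=
      sum_le_sum_of_subset_of_nonneg (fun k hk => mem_range.2 (mem_Ico.1 hk).2)
        fun k _ _ => mul_nonneg (hs k) (hq k)
    _ ≤ B := hB ⟨n, rfl⟩
  obtain ⟨n, hNn, hn⟩ := ((eventually_ge_atTop N).and
    (hsum.eventually_gt_atTop (∑ k ∈ range N, s k + B / ε))).exists
  rw [← sum_range_add_sum_Ico s hNn, add_lt_add_iff_left, div_lt_iff₀ hε] at hn
  linarith [htail n]

theorem tendsto_zero_of_sum_range_bddAbove {f : ℕ → ℝ} (hf : ∀ᶠ k in atTop, 0 ≤ f k)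
    (hB : BddAbove (Set.range fun n => ∑ k ∈ range n, f k)) : Tendsto f atTop (𝓝 0) := by
  obtain ⟨B, hB⟩ := hB
  obtain ⟨N, hN⟩ := eventually_atTop.1 hf
  have htail : Summable fun k => f (N + k) := by
    refine summable_of_sum_range_le (c := B - ∑ k ∈ range N, f k)
      (fun k => hN _ (Nat.le_add_right N k)) fun n => ?_
    have : ∑ k ∈ range (N + n), f k ≤ B := hB ⟨N + n, rfl⟩
    rw [sum_range_add] at this
    linarith
  rw [← tendsto_add_atTop_iff_nat N]
  simpa only [add_comm] using htail.tendsto_atTop_zero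

theorem tendsto_zero_of_sum_mul_bddAbove {s q : ℕ → ℝ} {r : ℝ} (hr : 0 < r)
    (hs : ∀ᶠ k in atTop, r ≤ s k) (hq : ∀ k, 0 ≤ q k)
    (hB : BddAbove (Set.range fun n => ∑ k ∈ range n, s k * q k)) :
    Tendsto q atTop (𝓝 0) := by
  have hsq : Tendsto (fun k => s k * q k) atTop (𝓝 0) :=
    tendsto_zero_of_sum_range_bddAbove (hs.mono fun k hk => mul_nonneg (hr.le.trans hk) (hq k)) hB
  refine squeeze_zero' (Eventually.of_forall hq) (hs.mono fun k hk => ?_)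
    (by simpa using hsq.div_const r)
  rw [le_div_iff₀ hr]
  nlinarith [hq k]

section Resolvent

variable {H : Type*} [NormedAddCommGroup H] [InnerProductSpace ℝ H]

theorem norm_sq_le_inner_of_mem_of_zero_mem {A : H → Set H}
    (hmono : ∀ x y xu yv : H, xu ∈ A x → yv ∈ A y → 0 ≤ ⟪x - y, xu - yv⟫_ℝ)
    {c : ℝ} (hc : 0 < c) {x j p : H} (hj : (1 / c) • (x - j) ∈ A j) (hp : 0 ∈ A p) :
    ‖x - j‖ ^ 2 ≤ ⟪x - p, x - j⟫_ℝ := by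
  have h := hmono j p _ 0 hj hp
  rw [sub_zero, real_inner_smul_right] at h
  have hjp : 0 ≤ ⟪j - p, x - j⟫_ℝ := nonneg_of_mul_nonneg_right h (by positivity)
  rw [show x - p = (x - j) + (j - p) by abel, inner_add_left, real_inner_self_eq_norm_sq]
  linarith

variable {v d : H}

theorem norm_sub_two_smul_le (h : ‖d‖ ^ 2 ≤ ⟪v, d⟫_ℝ) : ‖v - (2 : ℝ) • d‖ ≤ ‖v‖ := by
  refine (sq_le_sq₀ (norm_nonneg _) (norm_nonneg _)).1 ?_
  rw [norm_sub_sq_real, real_inner_smul_right, norm_smul, Real.norm_two]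
  nlinarith

theorem norm_smul_add_smul_sub_le (h : ‖d‖ ^ 2 ≤ ⟪v, d⟫_ℝ) (β γ : ℝ) :
    ‖β • v + γ • (v - d)‖ ≤ (|β + γ / 2| + |γ / 2|) * ‖v‖ := calc
  ‖β • v + γ • (v - d)‖ = ‖(β + γ / 2) • v + (γ / 2) • (v - (2 : ℝ) • d)‖ := by
    congr 1; module
  _ ≤ |β + γ / 2| * ‖v‖ + |γ / 2| * ‖v - (2 : ℝ) • d‖ := by
    refine (norm_add_le _ _).trans ?_
    rw [norm_smul, norm_smul, Real.norm_eq_abs, Real.norm_eq_abs]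
  _ ≤ (|β + γ / 2| + |γ / 2|) * ‖v‖ := by
    rw [add_mul]; gcongr; exact norm_sub_two_smul_le h

theorem sq_norm_smul_add_smul_sub_le (h : ‖d‖ ^ 2 ≤ ⟪v, d⟫_ℝ) {β γ : ℝ}
    (hγ : 0 ≤ γ * (β + γ)) (hβγ : |β + γ| ≤ 1) :
    ‖β • v + γ • (v - d)‖ ^ 2 ≤ ‖v‖ ^ 2 - γ * (2 * β + γ) * ‖d‖ ^ 2 := by
  rw [show β • v + γ • (v - d) = (β + γ) • v - γ • d by module, norm_sub_sq_real,
    norm_smul, norm_smul, real_inner_smul_left, real_inner_smul_right, mul_pow, mul_pow,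
    Real.norm_eq_abs, Real.norm_eq_abs, sq_abs, sq_abs]
  have hsq : (β + γ) ^ 2 ≤ 1 := by nlinarith [abs_nonneg (β + γ), sq_abs (β + γ)]
  nlinarith [mul_le_mul_of_nonneg_left h hγ, mul_le_mul_of_nonneg_right hsq (sq_nonneg ‖v‖)]

end Resolvent

theorem le_add_tsum_of_le_add {a ε : ℕ → ℝ} (hε : Summable ε) (hε0 : ∀ k, 0 ≤ ε k)
    (h : ∀ k, a (k + 1) ≤ a k + ε k) (n : ℕ) : a n ≤ a 0 + ∑' k, ε k := by
  have hpartial : a n ≤ a 0 + ∑ k ∈ range n, ε k := by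
    induction n with
    | zero => simp
    | succ n ih => rw [sum_range_succ]; linarith [h n]
  linarith [hε.sum_le_tsum (range n) fun k _ => hε0 k]

namespace RelaxedIteration

variable {H : Type*} [NormedAddCommGroup H] [InnerProductSpace ℝ H]
  {v d : ℕ → H} {β γ ε : ℕ → ℝ}

theorem norm_step_le (hvd : ∀ k, ‖d k‖ ^ 2 ≤ ⟪v k, d k⟫_ℝ)
    (hξ : ∀ k, |β k + γ k / 2| + |γ k / 2| ≤ 1) (k : ℕ) :
    ‖β k • v k + γ k • (v k - d k)‖ ≤ ‖v k‖ :=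
  (norm_smul_add_smul_sub_le (hvd k) _ _).trans (mul_le_of_le_one_left (norm_nonneg _) (hξ k))

theorem norm_succ_le_norm_step_add
    (hstep : ∀ k, ‖v (k + 1) - (β k • v k + γ k • (v k - d k))‖ ≤ ε k) (k : ℕ) :
    ‖v (k + 1)‖ ≤ ‖β k • v k + γ k • (v k - d k)‖ + ε k :=
  (norm_le_norm_add_norm_sub' _ _).trans (by gcongr; exact hstep k)

theorem mul_sq_norm_le (hvd : ∀ k, ‖d k‖ ^ 2 ≤ ⟪v k, d k⟫_ℝ)
    (hstep : ∀ k, ‖v (k + 1) - (β k • v k + γ k • (v k - d k))‖ ≤ ε k)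
    (hξ : ∀ k, |β k + γ k / 2| + |γ k / 2| ≤ 1) (hγ : ∀ k, 0 ≤ γ k * (β k + γ k)) (k : ℕ) :
    γ k * (2 * β k + γ k) * ‖d k‖ ^ 2 ≤ ‖v k‖ ^ 2 - ‖v (k + 1)‖ ^ 2 + (2 * ‖v k‖ + ε k) * ε k := by
  have hm := norm_step_le hvd hξ k
  have hβγ : |β k + γ k| ≤ 1 := calc
    |β k + γ k| = |(β k + γ k / 2) + γ k / 2| := by ring_nf
    _ ≤ 1 := (abs_add_le _ _).trans (hξ k)
  have hm_sq := sq_norm_smul_add_smul_sub_le (hvd k) (hγ k) hβγ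
  have hnext := pow_le_pow_left₀ (norm_nonneg _) (norm_succ_le_norm_step_add hstep k) 2
  have hε : 0 ≤ ε k := (norm_nonneg _).trans (hstep k)
  nlinarith [norm_nonneg (β k • v k + γ k • (v k - d k))]

theorem norm_le (hvd : ∀ k, ‖d k‖ ^ 2 ≤ ⟪v k, d k⟫_ℝ)
    (hstep : ∀ k, ‖v (k + 1) - (β k • v k + γ k • (v k - d k))‖ ≤ ε k)
    (hξ : ∀ k, |β k + γ k / 2| + |γ k / 2| ≤ 1) (hε : Summable ε) (k : ℕ) :
    ‖v k‖ ≤ ‖v 0‖ + ∑' k, ε k :=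
  le_add_tsum_of_le_add (a := fun k => ‖v k‖) hε (fun k => (norm_nonneg _).trans (hstep k))
    (fun k => (norm_succ_le_norm_step_add hstep k).trans (by gcongr; exact norm_step_le hvd hξ k)) k

theorem bddAbove_sum_mul_sq_norm (hvd : ∀ k, ‖d k‖ ^ 2 ≤ ⟪v k, d k⟫_ℝ)
    (hstep : ∀ k, ‖v (k + 1) - (β k • v k + γ k • (v k - d k))‖ ≤ ε k)
    (hξ : ∀ k, |β k + γ k / 2| + |γ k / 2| ≤ 1) (hγ : ∀ k, 0 ≤ γ k * (β k + γ k))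
    (hε : Summable ε) :
    BddAbove (Set.range fun n => ∑ k ∈ range n, γ k * (2 * β k + γ k) * ‖d k‖ ^ 2) := by
  set E := ∑' k, ε k
  set C := 2 * (‖v 0‖ + E) + E with hC_def
  have hε0 (k : ℕ) : 0 ≤ ε k := (norm_nonneg _).trans (hstep k)
  have hεE (k : ℕ) : ε k ≤ E := hε.le_tsum k fun j _ => hε0 j
  have hC (k : ℕ) : (2 * ‖v k‖ + ε k) * ε k ≤ C * ε k :=
    mul_le_mul_of_nonneg_right (by linarith [norm_le hvd hstep hξ hε k, hεE k]) (hε0 k)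
  refine ⟨‖v 0‖ ^ 2 + C * E, ?_⟩
  rintro _ ⟨n, rfl⟩
  calc ∑ k ∈ range n, γ k * (2 * β k + γ k) * ‖d k‖ ^ 2
      ≤ ∑ k ∈ range n, ((‖v k‖ ^ 2 - ‖v (k + 1)‖ ^ 2) + C * ε k) :=
        sum_le_sum fun k _ => (mul_sq_norm_le hvd hstep hξ hγ k).trans (by linarith [hC k])
    _ = ‖v 0‖ ^ 2 - ‖v n‖ ^ 2 + C * ∑ k ∈ range n, ε k := by
        rw [sum_add_distrib, sum_range_sub' (fun k => ‖v k‖ ^ 2), mul_sum]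
    _ ≤ ‖v 0‖ ^ 2 + C * E := by
        have hC0 : 0 ≤ C := by linarith [norm_nonneg (v 0), hε0 0, hεE 0]
        nlinarith [hε.sum_le_tsum (range n) fun k _ => hε0 k, sq_nonneg ‖v n‖]

end RelaxedIteration

theorem exists_wSeqClusterPt_of_norm_le {H : Type*} [NormedAddCommGroup H]
    [InnerProductSpace ℝ H] [CompleteSpace H] {y : ℕ → H} {M : ℝ} (hM : ∀ k, ‖y k‖ ≤ M) :
    ∃ z, WSeqClusterPt y z := by
  -- `H` need not be separable, but the closed span of the sequence is, so sequential
  -- Banach–Alaoglu applies to the functionals `⟪y k, ·⟫` restricted to it.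
  set V := (Submodule.span ℝ (Set.range y)).topologicalClosure
  have hyV (k : ℕ) : y k ∈ V :=
    Submodule.le_topologicalClosure _ (Submodule.subset_span ⟨k, rfl⟩)
  have : TopologicalSpace.SeparableSpace V :=
    (Set.countable_range y).isSeparable.span.closure.separableSpace
  have : CompleteSpace V := (Submodule.isClosed_topologicalClosure _).completeSpace_coe
  let ℓ (k : ℕ) : WeakDual ℝ V := toDual ℝ V ⟨y k, hyV k⟩
  have hℓ (k : ℕ) : ℓ k ∈ WeakDual.toStrongDual ⁻¹' Metric.closedBall 0 M :=
    (dist_zero_right _).trans_le (((toDual ℝ V).norm_map _).trans_le (hM k))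
  obtain ⟨ℓ', -, φ, hφ, hlim⟩ := WeakDual.isSeqCompact_closedBall ℝ V 0 M hℓ
  refine ⟨(toDual ℝ V).symm (WeakDual.toStrongDual ℓ'), φ, hφ, fun w => ?_⟩
  have hinner (v : V) : ⟪(v : H), w⟫_ℝ = toDual ℝ V v (V.orthogonalProjectionOnto w) := by
    rw [toDual_apply_apply, Submodule.inner_orthogonalProjectionOnto_eq_of_mem_left]
  rw [hinner, LinearIsometryEquiv.apply_symm_apply]
  exact ((WeakDual.eval_continuous _).tendsto ℓ').comp hlim
    |>.congr fun k => (hinner ⟨y (φ k), hyV _⟩).symm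

section MaximalMonotone

variable {H : Type*} [NormedAddCommGroup H] [InnerProductSpace ℝ H] {A : H → Set H}

theorem zero_mem_of_weakly_tendsto_of_tendsto_zero
    (hmono : ∀ x y xu yv : H, xu ∈ A x → yv ∈ A y → 0 ≤ ⟪x - y, xu - yv⟫_ℝ)
    (hmax : ∀ x xu : H, (∀ y yv : H, yv ∈ A y → 0 ≤ ⟪x - y, xu - yv⟫_ℝ) → xu ∈ A x)
    {j v : ℕ → H} {z : H} {M : ℝ} (hv : ∀ k, v k ∈ A (j k)) (hjM : ∀ k, ‖j k‖ ≤ M)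
    (hjz : ∀ w, Tendsto (fun k => ⟪j k, w⟫_ℝ) atTop (𝓝 ⟪z, w⟫_ℝ))
    (hv0 : Tendsto v atTop (𝓝 0)) : 0 ∈ A z := by
  refine hmax z 0 fun y yv hyv => ?_
  have hsmall : Tendsto (fun k => ⟪j k - y, v k⟫_ℝ) atTop (𝓝 0) := by
    refine squeeze_zero_norm (a := fun k => (M + ‖y‖) * ‖v k‖) (fun k => ?_)
      (by simpa using (tendsto_zero_iff_norm_tendsto_zero.1 hv0).const_mul (M + ‖y‖))
    rw [Real.norm_eq_abs]
    refine (abs_real_inner_le_norm _ _).trans ?_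
    gcongr
    exact (norm_sub_le _ _).trans (by gcongr; exact hjM k)
  have hlim : Tendsto (fun k => ⟪j k - y, v k - yv⟫_ℝ) atTop (𝓝 ⟪z - y, 0 - yv⟫_ℝ) := by
    convert hsmall.sub ((hjz yv).sub (tendsto_const_nhds (x := ⟪y, yv⟫_ℝ))) using 1
    · ext k; simp only [inner_sub_left, inner_sub_right]
    · simp only [inner_sub_left, inner_sub_right, inner_zero_right]
  exact ge_of_tendsto' hlim fun k => hmono _ _ _ _ (hv k) hyv

theorem zero_mem_of_wSeqClusterPt [CompleteSpace H]
    (hmono : ∀ x y xu yv : H, xu ∈ A x → yv ∈ A y → 0 ≤ ⟪x - y, xu - yv⟫_ℝ)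
    (hmax : ∀ x xu : H, (∀ y yv : H, yv ∈ A y → 0 ≤ ⟪x - y, xu - yv⟫_ℝ) → xu ∈ A x)
    {J : ℝ → H → H} (hJ : ∀ c : ℝ, 0 < c → ∀ x : H, (1 / c) • (x - J c x) ∈ A (J c x))
    {c : ℕ → ℝ} (hc : ∀ k, 0 < c k) {ε : ℝ} (hε : 0 < ε) (hcε : ∀ᶠ k in atTop, ε ≤ c k)
    {x : ℕ → H} {M : ℝ} (hxM : ∀ k, ‖x k‖ ≤ M)
    (hd : Tendsto (fun k => x k - J (c k) (x k)) atTop (𝓝 0))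
    {z : H} (hz : WSeqClusterPt x z) : 0 ∈ A z := by
  obtain ⟨φ, hφ, hxz⟩ := hz
  set d := fun k => x k - J (c k) (x k)
  have hJd (k : ℕ) : J (c k) (x k) = x k - d k := (sub_sub_cancel _ _).symm
  have hdφ := hd.comp hφ.tendsto_atTop
  obtain ⟨D, hD⟩ := isBounded_iff_forall_norm_le.1 (Metric.isBounded_range_of_tendsto d hd)
  refine zero_mem_of_weakly_tendsto_of_tendsto_zero hmono hmax (M := M + D)
    (j := fun k => J (c (φ k)) (x (φ k))) (v := fun k => (1 / c (φ k)) • d (φ k))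
    (fun k => hJ _ (hc _) _) (fun k => ?_) (fun w => ?_) ?_
  · rw [hJd]
    exact (norm_sub_le _ _).trans (add_le_add (hxM _) (hD _ ⟨_, rfl⟩))
  · simp only [hJd, inner_sub_left]
    simpa using (hxz w).sub (hdφ.inner tendsto_const_nhds)
  · refine squeeze_zero_norm' ((hφ.tendsto_atTop.eventually hcε).mono fun k hk => ?_)
      (by simpa using (tendsto_zero_iff_norm_tendsto_zero.1 hdφ).div_const ε)
    rw [norm_smul, Real.norm_eq_abs, abs_of_pos (by simpa using hc _), one_div_mul_eq_div]
    exact div_le_div_of_nonneg_left (norm_nonneg _) hε hk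

end MaximalMonotone

theorem norm_relaxation_error_le {H : Type*} [NormedAddCommGroup H] [InnerProductSpace ℝ H]
    (u p x j e : H) (α β γ δ : ℝ) :
    ‖α • u + β • x + γ • j + δ • e - p - (β • (x - p) + γ • (x - p - (x - j)))‖
      ≤ |α| * ‖u‖ + |1 - β - γ| * ‖p‖ + ‖δ • e‖ := by
  rw [show α • u + β • x + γ • j + δ • e - p - (β • (x - p) + γ • (x - p - (x - j)))
      = α • u + (β + γ - 1) • p + δ • e by module, sub_sub, abs_sub_comm 1]
  refine norm_add₃_le.trans_eq ?_
  rw [norm_smul, norm_smul, Real.norm_eq_abs, Real.norm_eq_abs]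

/-- Proposition 3.8: under `zer A ≠ ∅`, `ξ_k ≤ 1`, `γ_k(β_k+γ_k) ≥ 0`, and the summability
conditions, (1) `∑ γ_k(2β_k+γ_k)‖x_k - J_{c_k}(x_k)‖² < ∞`; (2) if
`∑ γ_k(2β_k+γ_k) = ∞` and `inf γ_k(2β_k+γ_k) ≥ 0` then
`liminf ‖x_k - J_{c_k}(x_k)‖ = 0`; (3) if `liminf γ_k(2β_k+γ_k) > 0` then
`x_k - J_{c_k}(x_k) → 0`; (4) if moreover `inf c_k > 0` or `c_k → ∞`, the weak sequential
cluster points of `(x_k)` form a nonempty subset of `zer A`. -/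
theorem stmt12 {H : Type*} [NormedAddCommGroup H] [InnerProductSpace ℝ H] [CompleteSpace H]
    (A : H → Set H)
    (hmono : ∀ x y xu yv : H, xu ∈ A x → yv ∈ A y → 0 ≤ ⟪x - y, xu - yv⟫_ℝ)
    (hmax : ∀ x xu : H, (∀ y yv : H, yv ∈ A y → 0 ≤ ⟪x - y, xu - yv⟫_ℝ) → xu ∈ A x)
    (J : ℝ → H → H)
    (hJ : ∀ c : ℝ, 0 < c → ∀ x : H, (1 / c) • (x - J c x) ∈ A (J c x))
    (u : H) (e : ℕ → H) (c α β γ δ : ℕ → ℝ) (hc : ∀ k, 0 < c k)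
    (x : ℕ → H)
    (hrec : ∀ k, x (k + 1) = α k • u + β k • x k + γ k • J (c k) (x k) + δ k • e k)
    (ξ : ℕ → ℝ) (hξ : ∀ k, ξ k = |β k + γ k / 2| + |γ k / 2|)
    (hzer : ∃ p : H, (0 : H) ∈ A p)
    (hξ1 : ∀ k, ξ k ≤ 1)
    (hγβγ : ∀ k, 0 ≤ γ k * (β k + γ k))
    (hαsum : Summable (fun k => |α k|))
    (hβγsum : Summable (fun k => |1 - β k - γ k|))
    (hdesum : Summable (fun k => ‖δ k • e k‖)) :
    -- (1)
    BddAbove (Set.range fun n =>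
      ∑ k ∈ Finset.range n, γ k * (2 * β k + γ k) * ‖x k - J (c k) (x k)‖ ^ 2) ∧
    -- (2)
    ((Tendsto (fun n => ∑ k ∈ Finset.range n, γ k * (2 * β k + γ k)) atTop atTop ∧
        (∀ k, 0 ≤ γ k * (2 * β k + γ k))) →
      ∀ ε > (0 : ℝ), ∃ᶠ k in atTop, ‖x k - J (c k) (x k)‖ < ε) ∧
    -- (3)
    ((∃ r > (0 : ℝ), ∀ᶠ k in atTop, r ≤ γ k * (2 * β k + γ k)) →
      Tendsto (fun k => x k - J (c k) (x k)) atTop (nhds (0 : H))) ∧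
    -- (4)
    (((∃ r > (0 : ℝ), ∀ᶠ k in atTop, r ≤ γ k * (2 * β k + γ k)) ∧
        ((∃ ε > (0 : ℝ), ∀ k, ε ≤ c k) ∨ Tendsto c atTop atTop)) →
      (∃ z : H, WSeqClusterPt x z) ∧ ∀ z : H, WSeqClusterPt x z → (0 : H) ∈ A z) := by
  obtain ⟨p, hp⟩ := hzer
  set d := fun k => x k - J (c k) (x k)
  set η := fun k => |α k| * ‖u‖ + |1 - β k - γ k| * ‖p‖ + ‖δ k • e k‖
  have hvd (k : ℕ) : ‖d k‖ ^ 2 ≤ ⟪x k - p, d k⟫_ℝ :=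
    norm_sq_le_inner_of_mem_of_zero_mem hmono (hc k) (hJ _ (hc k) _) hp
  have hstep (k : ℕ) : ‖x (k + 1) - p - (β k • (x k - p) + γ k • (x k - p - d k))‖ ≤ η k := by
    rw [hrec k]; exact norm_relaxation_error_le ..
  have hξ' (k : ℕ) : |β k + γ k / 2| + |γ k / 2| ≤ 1 := hξ k ▸ hξ1 k
  have hη : Summable η := ((hαsum.mul_right ‖u‖).add (hβγsum.mul_right ‖p‖)).add hdesum
  have hsum := RelaxedIteration.bddAbove_sum_mul_sq_norm (v := fun k => x k - p)
    hvd hstep hξ' hγβγ hη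
  have hxM (k : ℕ) : ‖x k‖ ≤ ‖p‖ + (‖x 0 - p‖ + ∑' k, η k) :=
    (norm_le_norm_add_norm_sub' _ p).trans
      (by gcongr; exact RelaxedIteration.norm_le (v := fun k => x k - p) hvd hstep hξ' hη k)
  have hd0 (hs : ∃ r > 0, ∀ᶠ k in atTop, r ≤ γ k * (2 * β k + γ k)) : Tendsto d atTop (𝓝 0) := by
    obtain ⟨r, hr, hs⟩ := hs
    rw [tendsto_zero_iff_norm_tendsto_zero]
    simpa using (tendsto_zero_of_sum_mul_bddAbove hr hs (fun k => sq_nonneg ‖d k‖) hsum).sqrt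
  refine ⟨hsum, fun ⟨hdiv, hs⟩ ε hε => ?_, hd0, fun ⟨hs, hcε⟩ => ⟨?_, fun z hz => ?_⟩⟩
  · exact (frequently_lt_of_sum_mul_bddAbove hs (fun k => sq_nonneg _) hdiv hsum
      (pow_pos hε 2)).mono fun k hk => lt_of_pow_lt_pow_left₀ 2 hε.le hk
  · exact exists_wSeqClusterPt_of_norm_le hxM
  · obtain ⟨ε, hε, hcε⟩ : ∃ ε > 0, ∀ᶠ k in atTop, ε ≤ c k := hcε.elim
      (fun ⟨ε, hε, h⟩ => ⟨ε, hε, .of_forall h⟩) fun h => ⟨1, one_pos, h.eventually_ge_atTop 1⟩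
    exact zero_mem_of_wSeqClusterPt hmono hmax hJ hc hε hcε hxM (hd0 hs) hz
end
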